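/- arXiv:math/0305295 — 9 statements merged into one kernel-verified Lean document; each statement's English description precedes it below -/
import Mathlib

section
/- Let H be an inner product space over 𝕂 (𝕂 = ℝ or ℂ) and e ∈ H with ‖e‖ = 1. Let φ, Φ, γ, Γ ∈ 𝕂 and x, y ∈ H be such that Re⟨Φe − x, x − φe⟩ ≥ 0 and Re⟨Γe − y, y − γe⟩ ≥ 0. Then |⟨x,y⟩ − ⟨x,e⟩⟨e,y⟩| ≤ (1/4)|Φ − φ||Γ − γ| − (Re⟨Φe − x, x − φe⟩)^{1/2} (Re⟨Γe − y, y − γe⟩)^{1/2} ≤ (1/4)|Φ − φ||Γ − γ|. -/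
open RCLike

variable {𝕂 H : Type*} [RCLike 𝕂] [NormedAddCommGroup H] [InnerProductSpace 𝕂 H]

local notation "⟪" x ", " y "⟫" => @inner 𝕂 _ _ x y

private lemma aux_bound (e x : H) (he : ‖e‖ = 1) (φ Φ : 𝕂) :
    ‖x - ⟪e, x⟫ • e‖ ^ 2 ≤ (‖Φ - φ‖ / 2) ^ 2 - re ⟪Φ • e - x, x - φ • e⟫ := by
  have hee : ⟪e, e⟫ = 1 := by
    rw [inner_self_eq_norm_sq_to_K, he]; norm_num
  have hre := inner_re_symm (𝕜 := 𝕂) e x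
  have him := inner_im_symm (𝕜 := 𝕂) e x
  have h1 : ‖x - ⟪e, x⟫ • e‖ ^ 2 = re ⟪x, x⟫ - (re ⟪x, e⟫ ^ 2 + im ⟪x, e⟫ ^ 2) := by
    rw [← inner_self_eq_norm_sq (𝕜 := 𝕂)]
    simp only [inner_sub_left, inner_sub_right, inner_smul_left, inner_smul_right, hee, mul_one,
      map_sub, RCLike.mul_re, RCLike.conj_re, RCLike.conj_im]
    rw [hre, him]; ring
  have h2 : re ⟪Φ • e - x, x - φ • e⟫ =
      (re Φ + re φ) * re ⟪x, e⟫ - (im Φ + im φ) * im ⟪x, e⟫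
        - (re Φ * re φ + im Φ * im φ) - re ⟪x, x⟫ := by
    simp only [inner_sub_left, inner_sub_right, inner_smul_left, inner_smul_right, hee, mul_one,
      map_sub, RCLike.mul_re, RCLike.conj_re, RCLike.conj_im]
    rw [hre, him]; ring
  have h3 : ‖Φ - φ‖ ^ 2 = (re Φ - re φ) ^ 2 + (im Φ - im φ) ^ 2 := by
    rw [RCLike.norm_sq_eq_def]; simp [map_sub]; ring
  rw [h1, h2]
  nlinarith [sq_nonneg (re ⟪x, e⟫ - (re Φ + re φ)/2), sq_nonneg (im ⟪x, e⟫ + (im Φ + im φ)/2),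
    sq_nonneg (‖Φ - φ‖/2)]

private lemma aux_real (A B P Q : ℝ) (hP : 0 ≤ P) (hQ : 0 ≤ Q)
    (hA0 : 0 ≤ A) (hB0 : 0 ≤ B) (hA : P ≤ A ^ 2) (hB : Q ≤ B ^ 2) :
    Real.sqrt (A ^ 2 - P) * Real.sqrt (B ^ 2 - Q) ≤ A * B - Real.sqrt P * Real.sqrt Q := by
  have hsP : Real.sqrt P ≤ A := by
    rw [show A = Real.sqrt (A ^ 2) by rw [Real.sqrt_sq hA0]]
    exact Real.sqrt_le_sqrt hA
  have hsQ : Real.sqrt Q ≤ B := by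
    rw [show B = Real.sqrt (B ^ 2) by rw [Real.sqrt_sq hB0]]
    exact Real.sqrt_le_sqrt hB
  have hrhs : 0 ≤ A * B - Real.sqrt P * Real.sqrt Q := by
    have := mul_le_mul hsP hsQ (Real.sqrt_nonneg Q) hA0
    linarith
  rw [← Real.sqrt_mul (by linarith)]
  rw [show A * B - Real.sqrt P * Real.sqrt Q =
      Real.sqrt ((A * B - Real.sqrt P * Real.sqrt Q) ^ 2) by rw [Real.sqrt_sq hrhs]]
  apply Real.sqrt_le_sqrt
  have e1 : Real.sqrt P ^ 2 = P := Real.sq_sqrt hP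
  have e2 : Real.sqrt Q ^ 2 = Q := Real.sq_sqrt hQ
  nlinarith [sq_nonneg (A * Real.sqrt Q - B * Real.sqrt P)]

theorem stmt0 (e x y : H) (he : ‖e‖ = 1) (φ Φ γ Γ : 𝕂)
    (hx : 0 ≤ re ⟪Φ • e - x, x - φ • e⟫)
    (hy : 0 ≤ re ⟪Γ • e - y, y - γ • e⟫) :
    ‖⟪x, y⟫ - ⟪x, e⟫ * ⟪e, y⟫‖ ≤
      (1 / 4) * ‖Φ - φ‖ * ‖Γ - γ‖ -
        Real.sqrt (re ⟪Φ • e - x, x - φ • e⟫) * Real.sqrt (re ⟪Γ • e - y, y - γ • e⟫) ∧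
    (1 / 4) * ‖Φ - φ‖ * ‖Γ - γ‖ -
        Real.sqrt (re ⟪Φ • e - x, x - φ • e⟫) * Real.sqrt (re ⟪Γ • e - y, y - γ • e⟫) ≤
      (1 / 4) * ‖Φ - φ‖ * ‖Γ - γ‖ := by
  have hee : ⟪e, e⟫ = 1 := by
    rw [inner_self_eq_norm_sq_to_K, he]; norm_num
  set P := re ⟪Φ • e - x, x - φ • e⟫ with hPdef
  set Q := re ⟪Γ • e - y, y - γ • e⟫ with hQdef
  set u := x - ⟪e, x⟫ • e with hu
  set v := y - ⟪e, y⟫ • e with hv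
  have hid : ⟪u, v⟫ = ⟪x, y⟫ - ⟪x, e⟫ * ⟪e, y⟫ := by
    simp only [hu, hv, inner_sub_left, inner_sub_right, inner_smul_left, inner_smul_right, hee,
      mul_one, inner_conj_symm]
    ring
  have hux : ‖u‖ ^ 2 ≤ (‖Φ - φ‖ / 2) ^ 2 - P := aux_bound e x he φ Φ
  have hvy : ‖v‖ ^ 2 ≤ (‖Γ - γ‖ / 2) ^ 2 - Q := aux_bound e y he γ Γ
  have hun : ‖u‖ ≤ Real.sqrt ((‖Φ - φ‖ / 2) ^ 2 - P) := by
    rw [show ‖u‖ = Real.sqrt (‖u‖ ^ 2) by rw [Real.sqrt_sq (norm_nonneg u)]]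
    exact Real.sqrt_le_sqrt hux
  have hvn : ‖v‖ ≤ Real.sqrt ((‖Γ - γ‖ / 2) ^ 2 - Q) := by
    rw [show ‖v‖ = Real.sqrt (‖v‖ ^ 2) by rw [Real.sqrt_sq (norm_nonneg v)]]
    exact Real.sqrt_le_sqrt hvy
  have hcs : ‖⟪x, y⟫ - ⟪x, e⟫ * ⟪e, y⟫‖ ≤ ‖u‖ * ‖v‖ := by
    rw [← hid]; exact norm_inner_le_norm u v
  have hmain : Real.sqrt ((‖Φ - φ‖ / 2) ^ 2 - P) * Real.sqrt ((‖Γ - γ‖ / 2) ^ 2 - Q) ≤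
      (‖Φ - φ‖ / 2) * (‖Γ - γ‖ / 2) - Real.sqrt P * Real.sqrt Q := by
    apply aux_real _ _ _ _ hx hy (by positivity) (by positivity)
    · nlinarith [sq_nonneg ‖u‖]
    · nlinarith [sq_nonneg ‖v‖]
  constructor
  · have h1 : ‖u‖ * ‖v‖ ≤ Real.sqrt ((‖Φ - φ‖ / 2) ^ 2 - P) * Real.sqrt ((‖Γ - γ‖ / 2) ^ 2 - Q) :=
      mul_le_mul hun hvn (norm_nonneg v) (Real.sqrt_nonneg _)
    calc ‖⟪x, y⟫ - ⟪x, e⟫ * ⟪e, y⟫‖ ≤ ‖u‖ * ‖v‖ := hcs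
      _ ≤ _ := h1
      _ ≤ (‖Φ - φ‖ / 2) * (‖Γ - γ‖ / 2) - Real.sqrt P * Real.sqrt Q := hmain
      _ = (1 / 4) * ‖Φ - φ‖ * ‖Γ - γ‖ - Real.sqrt P * Real.sqrt Q := by ring
  · have := mul_nonneg (Real.sqrt_nonneg P) (Real.sqrt_nonneg Q)
    linarith
end

section
/- Let H be an inner product space over 𝕂 (𝕂 = ℝ or ℂ), (e_i)_{i∈I} an orthonormal family in H, F a finite subset of I, φ_i, Φ_i, γ_i, Γ_i ∈ 𝕂 for i ∈ F, and x, y ∈ H. If Re⟨Σ_{i∈F} Φ_i e_i − x, x − Σ_{i∈F} φ_i e_i⟩ ≥ 0 and Re⟨Σ_{i∈F} Γ_i e_i − y, y − Σ_{i∈F} γ_i e_i⟩ ≥ 0, then |⟨x,y⟩ − Σ_{i∈F} ⟨x,e_i⟩⟨e_i,y⟩| ≤ (1/4)(Σ_{i∈F} |Φ_i − φ_i|²)^{1/2}(Σ_{i∈F} |Γ_i − γ_i|²)^{1/2} − (Re⟨Σ_{i∈F} Φ_i e_i − x, x − Σ_{i∈F} φ_i e_i⟩)^{1/2}(Re⟨Σ_{i∈F}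 Γ_i e_i − y, y − Σ_{i∈F} γ_i e_i⟩)^{1/2} ≤ (1/4)(Σ_{i∈F} |Φ_i − φ_i|²)^{1/2}(Σ_{i∈F} |Γ_i − γ_i|²)^{1/2}. -/
open RCLike Finset

variable {𝕂 H I : Type*} [RCLike 𝕂] [NormedAddCommGroup H] [InnerProductSpace 𝕂 H]

local notation "⟪" x ", " y "⟫" => @inner 𝕂 _ _ x y

lemma aux_real_s1 {p r s q t u : ℝ} (hp : 0 ≤ p) (hq : 0 ≤ q) (hr : 0 ≤ r) (ht : 0 ≤ t)
    (h1 : p ^ 2 + r ≤ s) (h2 : q ^ 2 + t ≤ u) :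
    p * q + Real.sqrt r * Real.sqrt t ≤ Real.sqrt (s * u) := by
  have hsu : 0 ≤ s * u := mul_nonneg (le_trans (by positivity) h1) (le_trans (by positivity) h2)
  have key : (p * q + Real.sqrt r * Real.sqrt t) ^ 2 ≤ s * u := by
    nlinarith [sq_nonneg (p * Real.sqrt t - q * Real.sqrt r), Real.sq_sqrt hr, Real.sq_sqrt ht,
      Real.sqrt_nonneg r, Real.sqrt_nonneg t, mul_nonneg hp hq, sq_nonneg p, sq_nonneg q,
      mul_nonneg ht (sq_nonneg p), mul_nonneg hr (sq_nonneg q), mul_nonneg hr ht]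
  calc p * q + Real.sqrt r * Real.sqrt t
      = Real.sqrt ((p * q + Real.sqrt r * Real.sqrt t) ^ 2) :=
        (Real.sqrt_sq (by positivity)).symm
    _ ≤ Real.sqrt (s * u) := Real.sqrt_le_sqrt key

lemma aux_quad (a b x : H) :
    re ⟪b - x, x - a⟫ =
      (1 / 4 : ℝ) * ‖b - a‖ ^ 2 - ‖x - (2 : 𝕂)⁻¹ • (a + b)‖ ^ 2 := by
  have h1 : b - x = (2 : 𝕂)⁻¹ • (b - a) - (x - (2 : 𝕂)⁻¹ • (a + b)) := by
    match_scalars <;> simp <;> ring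
  have h2 : x - a = (x - (2 : 𝕂)⁻¹ • (a + b)) + (2 : 𝕂)⁻¹ • (b - a) := by
    match_scalars <;> simp <;> ring
  set u : H := (2 : 𝕂)⁻¹ • (b - a) with hu
  set w : H := x - (2 : 𝕂)⁻¹ • (a + b) with hw
  have hnu : ‖u‖ ^ 2 = (1 / 4 : ℝ) * ‖b - a‖ ^ 2 := by
    rw [hu, norm_smul]
    simp [norm_inv, RCLike.norm_two]
    ring
  rw [h1, h2, inner_sub_left, inner_add_right, inner_add_right, map_sub, map_add, map_add]
  have hsymm : re ⟪w, u⟫ = re ⟪u, w⟫ := inner_re_symm w u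
  rw [hsymm]
  have h3 : re ⟪u, u⟫ = ‖u‖ ^ 2 := by
    rw [← inner_self_eq_norm_sq (𝕜 := 𝕂)]
  have h4 : re ⟪w, w⟫ = ‖w‖ ^ 2 := by
    rw [← inner_self_eq_norm_sq (𝕜 := 𝕂)]
  rw [h3, h4, hnu]
  ring

lemma aux_perp (e : I → H) (he : Orthonormal 𝕂 e) (F : Finset I) (x : H) (c : I → 𝕂) :
    ⟪x - ∑ i ∈ F, ⟪e i, x⟫ • e i, ∑ i ∈ F, c i • e i⟫ = 0 := by
  rw [inner_sub_left, he.inner_sum]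
  rw [inner_sum]
  simp only [inner_smul_right, inner_conj_symm]
  ring_nf
  simp [mul_comm]

lemma aux_pyth (e : I → H) (he : Orthonormal 𝕂 e) (F : Finset I) (x : H) (c : I → 𝕂) :
    ‖x - ∑ i ∈ F, ⟪e i, x⟫ • e i‖ ^ 2 ≤ ‖x - ∑ i ∈ F, c i • e i‖ ^ 2 := by
  have hdecomp : x - ∑ i ∈ F, c i • e i =
      (x - ∑ i ∈ F, ⟪e i, x⟫ • e i) + (∑ i ∈ F, (⟪e i, x⟫ - c i) • e i) := by
    simp [sub_smul, Finset.sum_sub_distrib]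
  have hperp := aux_perp e he F x (fun i => ⟪e i, x⟫ - c i)
  have h := norm_add_sq_eq_norm_sq_add_norm_sq_of_inner_eq_zero (𝕜 := 𝕂) _ _ hperp
  rw [hdecomp]
  nlinarith [h, mul_self_nonneg ‖∑ i ∈ F, (⟪e i, x⟫ - c i) • e i‖]

lemma aux_bnd (e : I → H) (he : Orthonormal 𝕂 e) (F : Finset I) (φ Φ : I → 𝕂) (x : H) :
    ‖x - ∑ i ∈ F, ⟪e i, x⟫ • e i‖ ^ 2 +
      re ⟪∑ i ∈ F, Φ i • e i - x, x - ∑ i ∈ F, φ i • e i⟫ ≤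
      (1 / 4 : ℝ) * ∑ i ∈ F, ‖Φ i - φ i‖ ^ 2 := by
  have hq := aux_quad (𝕂 := 𝕂) (∑ i ∈ F, φ i • e i) (∑ i ∈ F, Φ i • e i) x
  have hba : ‖(∑ i ∈ F, Φ i • e i) - ∑ i ∈ F, φ i • e i‖ ^ 2
      = ∑ i ∈ F, ‖Φ i - φ i‖ ^ 2 := by
    rw [← Finset.sum_sub_distrib]
    simp_rw [← sub_smul]
    rw [← inner_self_eq_norm_sq (𝕜 := 𝕂),
      he.inner_sum (fun i => Φ i - φ i) (fun i => Φ i - φ i) F, map_sum]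
    refine Finset.sum_congr rfl fun i _ => ?_
    rw [RCLike.conj_mul, ← RCLike.ofReal_pow, RCLike.ofReal_re]
  have hm : (2 : 𝕂)⁻¹ • ((∑ i ∈ F, φ i • e i) + ∑ i ∈ F, Φ i • e i)
      = ∑ i ∈ F, ((2 : 𝕂)⁻¹ * (φ i + Φ i)) • e i := by
    rw [← Finset.sum_add_distrib, Finset.smul_sum]
    refine Finset.sum_congr rfl fun i _ => ?_
    rw [← add_smul, smul_smul]
  rw [hm] at hq
  have hp := aux_pyth e he F x (fun i => (2 : 𝕂)⁻¹ * (φ i + Φ i))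
  rw [hba] at hq
  linarith

lemma aux_T (e : I → H) (he : Orthonormal 𝕂 e) (F : Finset I) (x y : H) :
    ⟪x, y⟫ - ∑ i ∈ F, ⟪x, e i⟫ * ⟪e i, y⟫ =
      ⟪x - ∑ i ∈ F, ⟪e i, x⟫ • e i, y - ∑ i ∈ F, ⟪e i, y⟫ • e i⟫ := by
  rw [inner_sub_left, inner_sub_right, inner_sub_right,
    he.inner_sum (fun i => ⟪e i, x⟫) (fun i => ⟪e i, y⟫) F,
    inner_sum, sum_inner]
  simp only [inner_smul_left, inner_smul_right, inner_conj_symm]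
  ring_nf
  congr 1
  · refine Finset.sum_congr rfl fun i _ => ?_
    ring

theorem stmt1 (e : I → H) (he : Orthonormal 𝕂 e) (F : Finset I)
    (φ Φ γ Γ : I → 𝕂) (x y : H)
    (hx : 0 ≤ re ⟪∑ i ∈ F, Φ i • e i - x, x - ∑ i ∈ F, φ i • e i⟫)
    (hy : 0 ≤ re ⟪∑ i ∈ F, Γ i • e i - y, y - ∑ i ∈ F, γ i • e i⟫) :
    ‖⟪x, y⟫ - ∑ i ∈ F, ⟪x, e i⟫ * ⟪e i, y⟫‖ ≤
      (1 / 4) * Real.sqrt (∑ i ∈ F, ‖Φ i - φ i‖ ^ 2) *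
          Real.sqrt (∑ i ∈ F, ‖Γ i - γ i‖ ^ 2) -
        Real.sqrt (re ⟪∑ i ∈ F, Φ i • e i - x, x - ∑ i ∈ F, φ i • e i⟫) *
          Real.sqrt (re ⟪∑ i ∈ F, Γ i • e i - y, y - ∑ i ∈ F, γ i • e i⟫) ∧
    (1 / 4) * Real.sqrt (∑ i ∈ F, ‖Φ i - φ i‖ ^ 2) *
          Real.sqrt (∑ i ∈ F, ‖Γ i - γ i‖ ^ 2) -
        Real.sqrt (re ⟪∑ i ∈ F, Φ i • e i - x, x - ∑ i ∈ F, φ i • e i⟫) *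
          Real.sqrt (re ⟪∑ i ∈ F, Γ i • e i - y, y - ∑ i ∈ F, γ i • e i⟫) ≤
      (1 / 4) * Real.sqrt (∑ i ∈ F, ‖Φ i - φ i‖ ^ 2) *
          Real.sqrt (∑ i ∈ F, ‖Γ i - γ i‖ ^ 2) := by
  set rx := re ⟪∑ i ∈ F, Φ i • e i - x, x - ∑ i ∈ F, φ i • e i⟫ with hrx
  set ry := re ⟪∑ i ∈ F, Γ i • e i - y, y - ∑ i ∈ F, γ i • e i⟫ with hry
  set Sx := ∑ i ∈ F, ‖Φ i - φ i‖ ^ 2 with hSx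
  set Sy := ∑ i ∈ F, ‖Γ i - γ i‖ ^ 2 with hSy
  have hSx0 : 0 ≤ Sx := Finset.sum_nonneg fun i _ => by positivity
  have hSy0 : 0 ≤ Sy := Finset.sum_nonneg fun i _ => by positivity
  refine ⟨?_, ?_⟩
  · have hbx := aux_bnd e he F φ Φ x
    have hby := aux_bnd e he F γ Γ y
    have hT := aux_T e he F x y
    have hCS : ‖⟪x, y⟫ - ∑ i ∈ F, ⟪x, e i⟫ * ⟪e i, y⟫‖ ≤
        ‖x - ∑ i ∈ F, ⟪e i, x⟫ • e i‖ * ‖y - ∑ i ∈ F, ⟪e i, y⟫ • e i‖ := by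
      rw [hT]; exact norm_inner_le_norm _ _
    have key := aux_real_s1 (norm_nonneg (x - ∑ i ∈ F, ⟪e i, x⟫ • e i))
      (norm_nonneg (y - ∑ i ∈ F, ⟪e i, y⟫ • e i)) hx hy hbx hby
    have hsqrt : Real.sqrt ((1 / 4 * Sx) * (1 / 4 * Sy)) =
        1 / 4 * Real.sqrt Sx * Real.sqrt Sy := by
      rw [show (1 / 4 * Sx) * (1 / 4 * Sy) = (1 / 16) * (Sx * Sy) by ring,
        Real.sqrt_mul (by norm_num), Real.sqrt_mul hSx0,
        show (1 / 16 : ℝ) = (1 / 4) ^ 2 by norm_num, Real.sqrt_sq (by norm_num)]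
      ring
    rw [hsqrt] at key
    linarith
  · have h := mul_nonneg (Real.sqrt_nonneg rx) (Real.sqrt_nonneg ry)
    linarith
end

section
/- Let H be an inner product space over 𝕂 (𝕂 = ℝ or ℂ), (e_i)_{i∈I} an orthonormal family in H, F a finite subset of I, φ_i, Φ_i ∈ 𝕂 for i ∈ F, and x ∈ H. If Re⟨Σ_{i∈F} Φ_i e_i − x, x − Σ_{i∈F} φ_i e_i⟩ ≥ 0, then 0 ≤ ‖x‖² − Σ_{i∈F} |⟨x,e_i⟩|² ≤ (1/4) Σ_{i∈F} |Φ_i − φ_i|² − Re⟨Σ_{i∈F} Φ_i e_i − x, x − Σ_{i∈F} φ_i e_i⟩ ≤ (1/4) Σ_{i∈F} |Φ_i − φ_i|². -/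
open RCLike Finset

variable {𝕂 H I : Type*} [RCLike 𝕂] [NormedAddCommGroup H] [InnerProductSpace 𝕂 H]

local notation "⟪" x ", " y "⟫" => @inner 𝕂 _ _ x y

lemma ptwise (Φ φ z : 𝕂) :
    re (starRingEnd 𝕂 Φ * z) + re (φ * starRingEnd 𝕂 z) - re (starRingEnd 𝕂 Φ * φ) - ‖z‖ ^ 2
      ≤ (1 / 4) * ‖Φ - φ‖ ^ 2 := by
  have h1 : ‖z‖ ^ 2 = re z ^ 2 + im z ^ 2 := norm_sq_eq_def.trans (by ring)
  have h2 : ‖Φ - φ‖ ^ 2 = (re Φ - re φ) ^ 2 + (im Φ - im φ) ^ 2 := by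
    rw [norm_sq_eq_def]; simp [sq]
  simp only [mul_re, conj_re, conj_im, h1, h2]
  nlinarith [sq_nonneg (re Φ + re φ - 2 * re z), sq_nonneg (im Φ + im φ - 2 * im z)]

theorem stmt2 (e : I → H) (he : Orthonormal 𝕂 e) (F : Finset I)
    (φ Φ : I → 𝕂) (x : H)
    (hx : 0 ≤ re ⟪∑ i ∈ F, Φ i • e i - x, x - ∑ i ∈ F, φ i • e i⟫) :
    0 ≤ ‖x‖ ^ 2 - ∑ i ∈ F, ‖⟪x, e i⟫‖ ^ 2 ∧
    ‖x‖ ^ 2 - ∑ i ∈ F, ‖⟪x, e i⟫‖ ^ 2 ≤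
      (1 / 4) * ∑ i ∈ F, ‖Φ i - φ i‖ ^ 2 -
        re ⟪∑ i ∈ F, Φ i • e i - x, x - ∑ i ∈ F, φ i • e i⟫ ∧
    (1 / 4) * ∑ i ∈ F, ‖Φ i - φ i‖ ^ 2 -
        re ⟪∑ i ∈ F, Φ i • e i - x, x - ∑ i ∈ F, φ i • e i⟫ ≤
      (1 / 4) * ∑ i ∈ F, ‖Φ i - φ i‖ ^ 2 := by
  have bessel : ∑ i ∈ F, ‖⟪x, e i⟫‖ ^ 2 ≤ ‖x‖ ^ 2 := by
    have h := he.sum_inner_products_le (s := F) x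
    calc ∑ i ∈ F, ‖⟪x, e i⟫‖ ^ 2 = ∑ i ∈ F, ‖⟪e i, x⟫‖ ^ 2 := by
          exact Finset.sum_congr rfl fun i _ => by rw [norm_inner_symm]
      _ ≤ ‖x‖ ^ 2 := h
  refine ⟨by linarith, ?_, by linarith⟩
  -- key expansion
  have hexp : ⟪∑ i ∈ F, Φ i • e i - x, x - ∑ i ∈ F, φ i • e i⟫
      = (∑ i ∈ F, starRingEnd 𝕂 (Φ i) * ⟪e i, x⟫)
        + (∑ i ∈ F, φ i * starRingEnd 𝕂 ⟪e i, x⟫)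
        - (∑ i ∈ F, starRingEnd 𝕂 (Φ i) * φ i) - ⟪x, x⟫ := by
    rw [inner_sub_left, inner_sub_right, inner_sub_right, he.inner_sum Φ φ F,
      sum_inner, inner_sum]
    simp only [inner_smul_left, inner_smul_right]
    have : (∑ i ∈ F, φ i * ⟪x, e i⟫) = ∑ i ∈ F, φ i * starRingEnd 𝕂 ⟪e i, x⟫ := by
      exact Finset.sum_congr rfl fun i _ => by rw [← inner_conj_symm]
    rw [this]; ring
  have hre : re ⟪∑ i ∈ F, Φ i • e i - x, x - ∑ i ∈ F, φ i • e i⟫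
      = (∑ i ∈ F, (re (starRingEnd 𝕂 (Φ i) * ⟪e i, x⟫)
          + re (φ i * starRingEnd 𝕂 ⟪e i, x⟫)
          - re (starRingEnd 𝕂 (Φ i) * φ i))) - ‖x‖ ^ 2 := by
    rw [hexp]
    simp [map_sum, inner_self_eq_norm_sq, Finset.sum_add_distrib, Finset.sum_sub_distrib]
  have hnorm : ∀ i ∈ F, ‖⟪x, e i⟫‖ ^ 2 = ‖⟪e i, x⟫‖ ^ 2 := fun i _ => by
    rw [norm_inner_symm]
  have key : ∑ i ∈ F, (re (starRingEnd 𝕂 (Φ i) * ⟪e i, x⟫)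
        + re (φ i * starRingEnd 𝕂 ⟪e i, x⟫)
        - re (starRingEnd 𝕂 (Φ i) * φ i) - ‖⟪e i, x⟫‖ ^ 2)
      ≤ ∑ i ∈ F, (1 / 4) * ‖Φ i - φ i‖ ^ 2 :=
    Finset.sum_le_sum fun i _ => ptwise (Φ i) (φ i) ⟪e i, x⟫
  have hsum : ∑ i ∈ F, ‖⟪x, e i⟫‖ ^ 2 = ∑ i ∈ F, ‖⟪e i, x⟫‖ ^ 2 :=
    Finset.sum_congr rfl hnorm
  rw [hre, hsum]
  rw [Finset.sum_sub_distrib] at key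
  rw [← Finset.mul_sum] at key
  linarith
end

section
/- Let H be an inner product space over 𝕂 (𝕂 = ℝ or ℂ), (e_i)_{i∈I} an orthonormal family in H, F a finite subset of I, φ_i, Φ_i ∈ 𝕂 for i ∈ F, and x ∈ H. Then the condition Re⟨Σ_{i∈F} Φ_i e_i − x, x − Σ_{i∈F} φ_i e_i⟩ ≥ 0 holds if and only if ‖x − Σ_{i∈F} ((φ_i + Φ_i)/2) e_i‖ ≤ (1/2)(Σ_{i∈F} |Φ_i − φ_i|²)^{1/2}. -/
/-!
With `a = ∑ Φᵢ eᵢ` and `b = ∑ φᵢ eᵢ`, expanding around the midpoint `m = (a + b)/2` gives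
`Re ⟨a - x, x - b⟩ = ‖(a - b)/2‖² - ‖x - m‖²`, so the condition says that `x` lies in the closed
ball with diameter `[a, b]`. Orthonormality turns `‖a - b‖` into `(∑ |Φᵢ - φᵢ|²)^{1/2}`.
-/

open RCLike Finset

variable {𝕂 H I : Type*} [RCLike 𝕂] [NormedAddCommGroup H] [InnerProductSpace 𝕂 H]

local notation "⟪" x ", " y "⟫" => @inner 𝕂 _ _ x y

theorem re_inner_add_sub_sub_sub (m d x : H) :
    re ⟪m + d - x, x - (m - d)⟫ = ‖d‖ ^ 2 - ‖x - m‖ ^ 2 := by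
  have h₁ : m + d - x = d - (x - m) := by abel
  have h₂ : x - (m - d) = (x - m) + d := by abel
  rw [h₁, h₂, inner_sub_left, inner_add_right, inner_add_right]
  simp only [map_sub, map_add, inner_re_symm (x - m) d, inner_self_eq_norm_sq]
  ring

theorem re_inner_sub_sub_nonneg_iff (a b x : H) :
    0 ≤ re ⟪a - x, x - b⟫ ↔ ‖x - (2⁻¹ : 𝕂) • (a + b)‖ ≤ ‖(2⁻¹ : 𝕂) • (a - b)‖ := by
  set m := (2⁻¹ : 𝕂) • (a + b)
  set d := (2⁻¹ : 𝕂) • (a - b)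
  have ha : a = m + d := by
    simp only [m, d, ← smul_add]
    rw [add_add_sub_cancel, ← two_smul 𝕂, smul_smul, inv_mul_cancel₀ two_ne_zero, one_smul]
  have hb : b = m - d := by
    simp only [m, d, ← smul_sub]
    rw [add_sub_sub_cancel, ← two_smul 𝕂, smul_smul, inv_mul_cancel₀ two_ne_zero, one_smul]
  rw [ha, hb, re_inner_add_sub_sub_sub, sub_nonneg]
  exact pow_le_pow_iff_left₀ (norm_nonneg _) (norm_nonneg _) two_ne_zero

theorem Orthonormal.norm_sum_smul {v : I → H} (hv : Orthonormal 𝕂 v) (c : I → 𝕂)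
    (s : Finset I) : ‖∑ i ∈ s, c i • v i‖ = √(∑ i ∈ s, ‖c i‖ ^ 2) := by
  rw [eq_comm, Real.sqrt_eq_iff_eq_sq (by positivity) (norm_nonneg _),
    ← inner_self_eq_norm_sq (𝕜 := 𝕂), hv.inner_sum, map_sum]
  simp only [RCLike.conj_mul, ← ofReal_pow, ofReal_re]

theorem stmt7 (e : I → H) (he : Orthonormal 𝕂 e) (F : Finset I)
    (φ Φ : I → 𝕂) (x : H) :
    0 ≤ re ⟪∑ i ∈ F, Φ i • e i - x, x - ∑ i ∈ F, φ i • e i⟫ ↔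
      ‖x - ∑ i ∈ F, ((φ i + Φ i) / 2) • e i‖ ≤
        (1 / 2) * Real.sqrt (∑ i ∈ F, ‖Φ i - φ i‖ ^ 2) := by
  have hmid : ∑ i ∈ F, ((φ i + Φ i) / 2) • e i =
      (2⁻¹ : 𝕂) • (∑ i ∈ F, Φ i • e i + ∑ i ∈ F, φ i • e i) := by
    rw [← sum_add_distrib, smul_sum]
    refine sum_congr rfl fun i _ => ?_
    rw [← add_smul, smul_smul, add_comm, div_eq_inv_mul]
  have hradius : ‖(2⁻¹ : 𝕂) • (∑ i ∈ F, Φ i • e i - ∑ i ∈ F, φ i • e i)‖ =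
      1 / 2 * √(∑ i ∈ F, ‖Φ i - φ i‖ ^ 2) := by
    simp_rw [norm_smul, ← sum_sub_distrib, ← sub_smul, he.norm_sum_smul]
    norm_num
  rw [re_inner_sub_sub_nonneg_iff, hmid, hradius]
end

section
/- Let H be an inner product space over 𝕂 (𝕂 = ℝ or ℂ), (e_i)_{i∈I} an orthonormal family in H, F a finite subset of I, φ_i, Φ_i ∈ 𝕂 for i ∈ F, x, y ∈ H, and λ ∈ (0,1). If both Re⟨Σ_{i∈F} Φ_i e_i − (λx + (1−λ)y), λx + (1−λ)y − Σ_{i∈F} φ_i e_i⟩ ≥ 0 and Re⟨Σ_{i∈F} Φ_i e_i − (λx − (1−λ)y), λx − (1−λ)y − Σ_{i∈F} φ_i e_i⟩ ≥ 0, then |Re[⟨x,y⟩ − Σ_{i∈F} ⟨x,e_i⟩⟨e_i,y⟩]| ≤ (1/(16λ(1−λ))) Σ_{i∈F} |Φ_i − φ_i|². -/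
open RCLike Finset

variable {𝕂 H I : Type*} [RCLike 𝕂] [NormedAddCommGroup H] [InnerProductSpace 𝕂 H]

local notation "⟪" x ", " y "⟫" => @inner 𝕂 _ _ x y

theorem stmt13 (e : I → H) (he : Orthonormal 𝕂 e) (F : Finset I)
    (φ Φ : I → 𝕂) (x y : H) (lam : ℝ) (hlam : lam ∈ Set.Ioo (0 : ℝ) 1)
    (hplus : 0 ≤ re ⟪∑ i ∈ F, Φ i • e i - ((lam : 𝕂) • x + ((1 - lam : ℝ) : 𝕂) • y),
        (lam : 𝕂) • x + ((1 - lam : ℝ) : 𝕂) • y - ∑ i ∈ F, φ i • e i⟫)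
    (hminus : 0 ≤ re ⟪∑ i ∈ F, Φ i • e i - ((lam : 𝕂) • x - ((1 - lam : ℝ) : 𝕂) • y),
        (lam : 𝕂) • x - ((1 - lam : ℝ) : 𝕂) • y - ∑ i ∈ F, φ i • e i⟫) :
    |re (⟪x, y⟫ - ∑ i ∈ F, ⟪x, e i⟫ * ⟪e i, y⟫)| ≤
      1 / (16 * (lam * (1 - lam))) * ∑ i ∈ F, ‖Φ i - φ i‖ ^ 2 := by
  classical
  obtain ⟨hl0, hl1⟩ := hlam
  have hl1' : (0:ℝ) < 1 - lam := by linarith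
  set D : ℝ := ∑ i ∈ F, ‖Φ i - φ i‖ ^ 2 with hD
  set P : H → H := fun z => ∑ i ∈ F, ⟪e i, z⟫ • e i with hPdef
  -- orthogonality of z - P z to combinations of e over F
  have horth : ∀ (z : H) (c : I → 𝕂), ⟪∑ i ∈ F, c i • e i, z - P z⟫ = 0 := by
    intro z c
    rw [sum_inner]
    refine Finset.sum_eq_zero fun j hj => ?_
    rw [inner_smul_left, inner_sub_right, hPdef]
    rw [he.inner_right_sum _ hj, sub_self, mul_zero]
  -- norm of difference of combinations
  have hnormD : ‖(∑ i ∈ F, Φ i • e i) - ∑ i ∈ F, φ i • e i‖ ^ 2 = D := by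
    have hw : (∑ i ∈ F, Φ i • e i) - ∑ i ∈ F, φ i • e i = ∑ i ∈ F, (Φ i - φ i) • e i := by
      rw [← Finset.sum_sub_distrib]
      exact Finset.sum_congr rfl fun i _ => (sub_smul _ _ _).symm
    rw [hw, ← @inner_self_eq_norm_sq 𝕂, he.inner_sum, map_sum]
    refine Finset.sum_congr rfl fun i _ => ?_
    rw [RCLike.conj_mul, ← RCLike.ofReal_pow, RCLike.ofReal_re]
  -- key estimate
  have hkey : ∀ z : H,
      0 ≤ re ⟪∑ i ∈ F, Φ i • e i - z, z - ∑ i ∈ F, φ i • e i⟫ →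
      ‖z - P z‖ ^ 2 ≤ D / 4 := by
    intro z hz
    set A := ∑ i ∈ F, Φ i • e i
    set B := ∑ i ∈ F, φ i • e i
    have h1 : ‖(A - z) - (z - B)‖ ^ 2 ≤ ‖(A - z) + (z - B)‖ ^ 2 := by
      rw [norm_sub_sq (𝕜 := 𝕂), norm_add_sq (𝕜 := 𝕂)]
      linarith
    have h2 : (A - z) + (z - B) = A - B := by abel
    have h3 : (A - z) - (z - B) = (2 : 𝕂) • ((1/2 : 𝕂) • (A + B) - z) := by
      module
    set m : H := (1/2 : 𝕂) • (A + B) with hm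
    have h4 : ‖m - z‖ ^ 2 ≤ D / 4 := by
      have : ‖(2:𝕂) • (m - z)‖ ^ 2 ≤ D := by
        rw [← h3, ← hnormD, ← h2]
        exact h1
      rw [norm_smul] at this
      simp at this
      nlinarith [norm_nonneg (m - z)]
    -- Pythagoras: ‖z - P z‖ ≤ ‖z - m‖
    have hm_comb : m = ∑ i ∈ F, ((1/2 : 𝕂) * (Φ i + φ i)) • e i := by
      rw [hm, ← Finset.sum_add_distrib]
      rw [Finset.smul_sum]
      refine Finset.sum_congr rfl fun i _ => ?_
      module
    have hPm : P z - m = ∑ i ∈ F, (⟪e i, z⟫ - (1/2 : 𝕂) * (Φ i + φ i)) • e i := by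
      rw [hPdef, hm_comb, ← Finset.sum_sub_distrib]
      simp [sub_smul]
    have hpyth : ‖z - m‖ ^ 2 = ‖z - P z‖ ^ 2 + ‖P z - m‖ ^ 2 := by
      have hzero : ⟪P z - m, z - P z⟫ = 0 := by rw [hPm]; exact horth z _
      have hzero' : re ⟪z - P z, P z - m⟫ = 0 := by
        rw [← inner_conj_symm, hzero]; simp
      have : z - m = (z - P z) + (P z - m) := by abel
      rw [this, norm_add_sq (𝕜 := 𝕂), hzero']
      ring
    rw [norm_sub_rev z m] at hpyth
    nlinarith [sq_nonneg ‖P z - m‖, hpyth, h4]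
  -- linearity of z ↦ z - P z
  have hPlin : ∀ (c d : 𝕂) (u v : H),
      (c • u + d • v) - P (c • u + d • v) = c • (u - P u) + d • (v - P v) := by
    intro c d u v
    simp only [hPdef, inner_add_right, inner_smul_right, add_smul, smul_smul,
      Finset.sum_add_distrib, smul_sub, Finset.smul_sum]
    abel
  set a : H := x - P x with ha
  set b : H := y - P y with hb
  set la : 𝕂 := (lam : 𝕂)
  set lb : 𝕂 := ((1 - lam : ℝ) : 𝕂)
  have hplus' : ‖la • a + lb • b‖ ^ 2 ≤ D / 4 := by
    have := hkey (la • x + lb • y) hplus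
    rwa [hPlin] at this
  have hminus' : ‖la • a - lb • b‖ ^ 2 ≤ D / 4 := by
    have h := hkey (la • x - lb • y) hminus
    have h2 : la • x - lb • y - P (la • x - lb • y) = la • a - lb • b := by
      have h3 := hPlin la (-lb) x y
      simp only [neg_smul, ← sub_eq_add_neg] at h3
      exact h3
    rwa [h2] at h
  -- identity: the target real part equals re ⟪a, b⟫
  have hab : ⟪a, b⟫ = ⟪x, y⟫ - ∑ i ∈ F, ⟪x, e i⟫ * ⟪e i, y⟫ := by
    rw [ha, hb, inner_sub_left, inner_sub_right, inner_sub_right]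
    have h1 : ⟪x, P y⟫ = ∑ i ∈ F, ⟪x, e i⟫ * ⟪e i, y⟫ := by
      rw [hPdef, inner_sum]
      refine Finset.sum_congr rfl fun i _ => ?_
      rw [inner_smul_right, mul_comm]
    have h2 : ⟪P x, y⟫ = ∑ i ∈ F, ⟪x, e i⟫ * ⟪e i, y⟫ := by
      rw [hPdef, sum_inner]
      refine Finset.sum_congr rfl fun i _ => ?_
      rw [inner_smul_left, inner_conj_symm]
    have h3 : ⟪P x, P y⟫ = ∑ i ∈ F, ⟪x, e i⟫ * ⟪e i, y⟫ := by
      rw [hPdef, he.inner_sum]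
      refine Finset.sum_congr rfl fun i _ => ?_
      rw [inner_conj_symm]
    rw [h1, h2, h3]
    ring
  rw [← hab]
  -- polarization
  have hpol : ‖la • a + lb • b‖ ^ 2 - ‖la • a - lb • b‖ ^ 2
      = 4 * (lam * (1 - lam)) * re ⟪a, b⟫ := by
    rw [norm_add_sq (𝕜 := 𝕂), norm_sub_sq (𝕜 := 𝕂)]
    have : re ⟪la • a, lb • b⟫ = (lam * (1 - lam)) * re ⟪a, b⟫ := by
      rw [inner_smul_left, inner_smul_right]
      simp only [la, lb, RCLike.conj_ofReal, ← RCLike.ofReal_mul, ← mul_assoc]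
      rw [RCLike.re_ofReal_mul]
    rw [this]; ring
  have hnn1 : (0:ℝ) ≤ ‖la • a + lb • b‖ ^ 2 := by positivity
  have hnn2 : (0:ℝ) ≤ ‖la • a - lb • b‖ ^ 2 := by positivity
  have habs : |4 * (lam * (1 - lam)) * re ⟪a, b⟫| ≤ D / 4 := by
    rw [← hpol]
    rw [abs_sub_le_iff]
    constructor <;> linarith
  have hmpos : (0:ℝ) < lam * (1 - lam) := by positivity
  rw [abs_mul, abs_of_pos (by positivity : (0:ℝ) < 4 * (lam * (1 - lam)))] at habs
  rw [one_div, inv_mul_eq_div, le_div_iff₀ (by positivity)]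
  nlinarith [habs]
end

section
/- Let H be a real inner product space, (e_i)_{i∈I} an orthonormal family in H, F a finite subset of I, m_i, M_i ∈ ℝ for i ∈ F, x, y ∈ H, and λ ∈ (0,1). If both ⟨Σ_{i∈F} M_i e_i − (λx + (1−λ)y), λx + (1−λ)y − Σ_{i∈F} m_i e_i⟩ ≥ 0 and ⟨Σ_{i∈F} M_i e_i − (λx − (1−λ)y), λx − (1−λ)y − Σ_{i∈F} m_i e_i⟩ ≥ 0, then |⟨x,y⟩ − Σ_{i∈F} ⟨x,e_i⟩⟨e_i,y⟩| ≤ (1/(16λ(1−λ))) Σ_{i∈F} (M_i − m_i)². -/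
open Finset RealInnerProductSpace

variable {H I : Type*} [NormedAddCommGroup H] [InnerProductSpace ℝ H]

lemma aux14 (e : I → H) (he : Orthonormal ℝ e) (F : Finset I)
    (m M : I → ℝ) (z : H)
    (h : 0 ≤ ⟪∑ i ∈ F, M i • e i - z, z - ∑ i ∈ F, m i • e i⟫) :
    ‖z‖ ^ 2 - ∑ i ∈ F, ⟪z, e i⟫ ^ 2 ≤ (1 / 4) * ∑ i ∈ F, (M i - m i) ^ 2 := by
  classical
  have hee : ∀ i j, ⟪e i, e j⟫ = if i = j then (1:ℝ) else 0 := orthonormal_iff_ite.mp he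
  have hMz : ⟪∑ i ∈ F, M i • e i, z⟫ = ∑ i ∈ F, M i * ⟪z, e i⟫ := by
    rw [sum_inner]
    exact Finset.sum_congr rfl fun i _ => by
      rw [real_inner_smul_left, real_inner_comm]
  have hzm : ⟪z, ∑ i ∈ F, m i • e i⟫ = ∑ i ∈ F, m i * ⟪z, e i⟫ := by
    rw [inner_sum]
    exact Finset.sum_congr rfl fun i _ => by rw [real_inner_smul_right]
  have hMm : ⟪∑ i ∈ F, M i • e i, ∑ i ∈ F, m i • e i⟫ = ∑ i ∈ F, M i * m i := by
    rw [sum_inner]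
    refine Finset.sum_congr rfl fun i hi => ?_
    rw [real_inner_smul_left, inner_sum]
    simp only [real_inner_smul_right, hee, mul_ite, mul_one, mul_zero,
      Finset.sum_ite_eq, hi, if_true]
  have hzz : ⟪z, z⟫ = ‖z‖ ^ 2 := real_inner_self_eq_norm_sq z
  rw [inner_sub_left, inner_sub_right, inner_sub_right] at h
  rw [hMz, hzm, hMm, hzz] at h
  have key : ∀ i ∈ F, (M i + m i) * ⟪z, e i⟫ - M i * m i - ⟪z, e i⟫ ^ 2
      ≤ (1/4) * (M i - m i) ^ 2 := by
    intro i _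
    nlinarith [sq_nonneg (M i + m i - 2 * ⟪z, e i⟫)]
  have hsum := Finset.sum_le_sum key
  have hadd : ∑ i ∈ F, (M i + m i) * ⟪z, e i⟫
      = ∑ i ∈ F, M i * ⟪z, e i⟫ + ∑ i ∈ F, m i * ⟪z, e i⟫ := by
    rw [← Finset.sum_add_distrib]
    exact Finset.sum_congr rfl fun i _ => by ring
  have h2 : ‖z‖ ^ 2 ≤ ∑ i ∈ F, (M i + m i) * ⟪z, e i⟫ - ∑ i ∈ F, M i * m i := by
    rw [hadd]; linarith
  rw [Finset.mul_sum]
  calc ‖z‖ ^ 2 - ∑ i ∈ F, ⟪z, e i⟫ ^ 2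
      ≤ ∑ i ∈ F, ((M i + m i) * ⟪z, e i⟫ - M i * m i - ⟪z, e i⟫ ^ 2) := by
        rw [Finset.sum_sub_distrib, Finset.sum_sub_distrib]; linarith
    _ ≤ ∑ i ∈ F, (1/4) * (M i - m i) ^ 2 := hsum

lemma bessel14 (e : I → H) (he : Orthonormal ℝ e) (F : Finset I) (z : H) :
    0 ≤ ‖z‖ ^ 2 - ∑ i ∈ F, ⟪z, e i⟫ ^ 2 := by
  have := he.sum_inner_products_le (s := F) z
  have : ∑ i ∈ F, ⟪z, e i⟫ ^ 2 ≤ ‖z‖ ^ 2 := by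
    calc ∑ i ∈ F, ⟪z, e i⟫ ^ 2 = ∑ i ∈ F, ‖⟪e i, z⟫‖ ^ 2 := by
          refine Finset.sum_congr rfl fun i _ => ?_
          rw [real_inner_comm, Real.norm_eq_abs, sq_abs]
      _ ≤ ‖z‖ ^ 2 := he.sum_inner_products_le z
  linarith

theorem stmt14 (e : I → H) (he : Orthonormal ℝ e) (F : Finset I)
    (m M : I → ℝ) (x y : H) (lam : ℝ) (hlam : lam ∈ Set.Ioo (0 : ℝ) 1)
    (hplus : 0 ≤ ⟪∑ i ∈ F, M i • e i - (lam • x + (1 - lam) • y),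
        lam • x + (1 - lam) • y - ∑ i ∈ F, m i • e i⟫)
    (hminus : 0 ≤ ⟪∑ i ∈ F, M i • e i - (lam • x - (1 - lam) • y),
        lam • x - (1 - lam) • y - ∑ i ∈ F, m i • e i⟫) :
    |⟪x, y⟫ - ∑ i ∈ F, ⟪x, e i⟫ * ⟪e i, y⟫| ≤
      1 / (16 * (lam * (1 - lam))) * ∑ i ∈ F, (M i - m i) ^ 2 := by
  obtain ⟨hl0, hl1⟩ := hlam
  have hll : 0 < lam * (1 - lam) := mul_pos hl0 (by linarith)
  have hQp := aux14 e he F m M (lam • x + (1 - lam) • y) hplus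
  have hQm := aux14 e he F m M (lam • x - (1 - lam) • y) hminus
  have hBp := bessel14 e he F (lam • x + (1 - lam) • y)
  have hBm := bessel14 e he F (lam • x - (1 - lam) • y)
  -- polarization identity
  have hpol : (‖lam • x + (1 - lam) • y‖ ^ 2 - ∑ i ∈ F, ⟪lam • x + (1 - lam) • y, e i⟫ ^ 2)
      - (‖lam • x - (1 - lam) • y‖ ^ 2 - ∑ i ∈ F, ⟪lam • x - (1 - lam) • y, e i⟫ ^ 2)
      = 4 * (lam * (1 - lam)) * (⟪x, y⟫ - ∑ i ∈ F, ⟪x, e i⟫ * ⟪e i, y⟫) := by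
    have hn : ‖lam • x + (1 - lam) • y‖ ^ 2 - ‖lam • x - (1 - lam) • y‖ ^ 2
        = 4 * ⟪lam • x, (1 - lam) • y⟫ := by
      rw [norm_add_sq_real, norm_sub_sq_real]; ring
    have huv : ⟪lam • x, (1 - lam) • y⟫ = lam * ((1 - lam) * ⟪x, y⟫) := by
      rw [real_inner_smul_left, real_inner_smul_right]
    have hsums : ∑ i ∈ F, ⟪lam • x + (1 - lam) • y, e i⟫ ^ 2
          - ∑ i ∈ F, ⟪lam • x - (1 - lam) • y, e i⟫ ^ 2
        = 4 * (lam * (1 - lam)) * ∑ i ∈ F, ⟪x, e i⟫ * ⟪e i, y⟫ := by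
      rw [← Finset.sum_sub_distrib, Finset.mul_sum]
      refine Finset.sum_congr rfl fun i _ => ?_
      rw [inner_add_left, inner_sub_left, real_inner_smul_left, real_inner_smul_left,
        real_inner_comm (e i) y]
      ring
    have hsplit : (‖lam • x + (1 - lam) • y‖ ^ 2 - ∑ i ∈ F, ⟪lam • x + (1 - lam) • y, e i⟫ ^ 2)
        - (‖lam • x - (1 - lam) • y‖ ^ 2 - ∑ i ∈ F, ⟪lam • x - (1 - lam) • y, e i⟫ ^ 2)
        = (‖lam • x + (1 - lam) • y‖ ^ 2 - ‖lam • x - (1 - lam) • y‖ ^ 2)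
          - (∑ i ∈ F, ⟪lam • x + (1 - lam) • y, e i⟫ ^ 2
            - ∑ i ∈ F, ⟪lam • x - (1 - lam) • y, e i⟫ ^ 2) := by ring
    rw [hsplit, hn, hsums, huv]; ring
  have h16 : 0 < 16 * (lam * (1 - lam)) := by positivity
  have hc : 4 * (lam * (1 - lam)) * (⟪x, y⟫ - ∑ i ∈ F, ⟪x, e i⟫ * ⟪e i, y⟫)
      ≤ 1 / 4 * ∑ i ∈ F, (M i - m i) ^ 2 := by linarith
  have hc2 : -(4 * (lam * (1 - lam)) * (⟪x, y⟫ - ∑ i ∈ F, ⟪x, e i⟫ * ⟪e i, y⟫))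
      ≤ 1 / 4 * ∑ i ∈ F, (M i - m i) ^ 2 := by linarith
  rw [abs_le]
  constructor
  · rw [neg_le, div_mul_eq_mul_div, one_mul, le_div_iff₀ h16]
    nlinarith [hc2]
  · rw [div_mul_eq_mul_div, one_mul, le_div_iff₀ h16]
    nlinarith [hc]
end

section
/- Let (Ω, Σ, μ) be a measure space, ρ ≥ 0 a μ-measurable weight, and (f_i)_{i∈I} a family in L²_ρ(Ω, 𝕂) with ∫_Ω ρ f_i \overline{f_j} dμ = δ_{ij} for i, j ∈ I. Let F be a finite subset of I, φ_i, Φ_i ∈ 𝕂 for i ∈ F, and f ∈ L²_ρ(Ω, 𝕂) such that ∫_Ω ρ(s) Re[(Σ_{i∈F} Φ_i f_i(s) − f(s))(\overline{f(s)} − Σ_{i∈F} \overline{φ_i} \overline{f_i(s)})] dμ(s) ≥ 0. Then 0 ≤ ∫_Ω ρ|f|² dμ − Σ_{i∈F} |∫_Ω ρ f \overline{f_i} dμ|² ≤ (1/4) Σ_{i∈F} |Φ_i − φ_i|² − Σ_{i∈F} |(Φ_i + φ_i)/2 − ∫_Ω ρ f \overline{f_i} dμ|² ≤ (1/4) Σ_{i∈F}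 |Φ_i − φ_i|². -/
open RCLike Finset MeasureTheory

variable {𝕂 Ω I : Type*} [RCLike 𝕂] [MeasurableSpace Ω] [DecidableEq I]

private lemma aux_int {μ : Measure Ω} {ρ : Ω → ℝ} (hρ : ∀ s, 0 ≤ ρ s) (hρm : Measurable ρ)
    {u v : Ω → 𝕂} (hu : AEStronglyMeasurable u μ) (hv : AEStronglyMeasurable v μ)
    (hu2 : Integrable (fun s => ρ s * ‖u s‖ ^ 2) μ)
    (hv2 : Integrable (fun s => ρ s * ‖v s‖ ^ 2) μ) :
    Integrable (fun s => (ρ s : 𝕂) * (u s * (starRingEnd 𝕂) (v s))) μ := by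
  have hmeas : AEStronglyMeasurable (fun s => (ρ s : 𝕂) * (u s * (starRingEnd 𝕂) (v s))) μ :=
    ((RCLike.continuous_ofReal.measurable.comp hρm).aestronglyMeasurable).mul
      (hu.mul (RCLike.continuous_conj.comp_aestronglyMeasurable hv))
  refine (hu2.add hv2).mono' hmeas (Filter.Eventually.of_forall fun s => ?_)
  have h1 : ‖(ρ s : 𝕂) * (u s * (starRingEnd 𝕂) (v s))‖ = ρ s * (‖u s‖ * ‖v s‖) := by
    rw [norm_mul, norm_mul, RCLike.norm_conj, RCLike.norm_ofReal, abs_of_nonneg (hρ s)]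
  rw [h1]
  have h2 : ‖u s‖ * ‖v s‖ ≤ ‖u s‖ ^ 2 + ‖v s‖ ^ 2 := by nlinarith [sq_nonneg (‖u s‖ - ‖v s‖), sq_nonneg (‖u s‖ + ‖v s‖)]
  calc ρ s * (‖u s‖ * ‖v s‖) ≤ ρ s * (‖u s‖ ^ 2 + ‖v s‖ ^ 2) :=
        mul_le_mul_of_nonneg_left h2 (hρ s)
    _ = ρ s * ‖u s‖ ^ 2 + ρ s * ‖v s‖ ^ 2 := by ring

private lemma per_i (A B c : 𝕂) :
    ‖(A + B) / 2 - c‖ ^ 2 - ‖c‖ ^ 2 - (1 / 4) * ‖A - B‖ ^ 2 =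
      re (A * (starRingEnd 𝕂) B) - re ((starRingEnd 𝕂) B * c) - re (A * (starRingEnd 𝕂) c) := by
  have h : ∀ z : 𝕂, ‖z‖ ^ 2 = re z * re z + im z * im z := by
    intro z
    rw [← RCLike.normSq_eq_def', RCLike.normSq_apply]
  simp only [h, map_sub, map_add, map_div, mul_re, mul_im, conj_re, conj_im,
    RCLike.div_re, RCLike.div_im, map_mul]
  have h2 : RCLike.normSq (2 : 𝕂) = 4 := by
    rw [RCLike.normSq_eq_def', RCLike.norm_ofNat]; norm_num
  rw [h2]
  have h2re : re (2 : 𝕂) = 2 := by simp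
  have h2im : im (2 : 𝕂) = 0 := by simp
  rw [h2re, h2im]
  ring

theorem stmt15 (μ : Measure Ω) (ρ : Ω → ℝ) (hρ : ∀ s, 0 ≤ ρ s) (hρm : Measurable ρ)
    (fi : I → Ω → 𝕂) (hfim : ∀ i, AEStronglyMeasurable (fi i) μ)
    (hfi2 : ∀ i, Integrable (fun s => ρ s * ‖fi i s‖ ^ 2) μ)
    (horth : ∀ i j, ∫ s, (ρ s : 𝕂) * (fi i s * (starRingEnd 𝕂) (fi j s)) ∂μ =
      if i = j then 1 else 0)
    (F : Finset I) (φ Φ : I → 𝕂)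
    (f : Ω → 𝕂) (hfm : AEStronglyMeasurable f μ)
    (hf2 : Integrable (fun s => ρ s * ‖f s‖ ^ 2) μ)
    (hx : 0 ≤ ∫ s, ρ s * re ((∑ i ∈ F, Φ i * fi i s - f s) *
        ((starRingEnd 𝕂) (f s) - ∑ i ∈ F, (starRingEnd 𝕂) (φ i) * (starRingEnd 𝕂) (fi i s))) ∂μ) :
    0 ≤ (∫ s, ρ s * ‖f s‖ ^ 2 ∂μ) -
        ∑ i ∈ F, ‖∫ s, (ρ s : 𝕂) * (f s * (starRingEnd 𝕂) (fi i s)) ∂μ‖ ^ 2 ∧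
    (∫ s, ρ s * ‖f s‖ ^ 2 ∂μ) -
        ∑ i ∈ F, ‖∫ s, (ρ s : 𝕂) * (f s * (starRingEnd 𝕂) (fi i s)) ∂μ‖ ^ 2 ≤
      (1 / 4) * ∑ i ∈ F, ‖Φ i - φ i‖ ^ 2 -
        ∑ i ∈ F, ‖(Φ i + φ i) / 2 - ∫ s, (ρ s : 𝕂) * (f s * (starRingEnd 𝕂) (fi i s)) ∂μ‖ ^ 2 ∧
    (1 / 4) * ∑ i ∈ F, ‖Φ i - φ i‖ ^ 2 -
        ∑ i ∈ F, ‖(Φ i + φ i) / 2 - ∫ s, (ρ s : 𝕂) * (f s * (starRingEnd 𝕂) (fi i s)) ∂μ‖ ^ 2 ≤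
      (1 / 4) * ∑ i ∈ F, ‖Φ i - φ i‖ ^ 2 := by
  set c : I → 𝕂 := fun i => ∫ s, (ρ s : 𝕂) * (f s * (starRingEnd 𝕂) (fi i s)) ∂μ with hc
  set If : ℝ := ∫ s, ρ s * ‖f s‖ ^ 2 ∂μ with hIf
  -- basic integrals
  have hint_ff : Integrable (fun s => (ρ s : 𝕂) * (f s * (starRingEnd 𝕂) (f s))) μ :=
    aux_int hρ hρm hfm hfm hf2 hf2
  have hint_ffi : ∀ i, Integrable (fun s => (ρ s : 𝕂) * (f s * (starRingEnd 𝕂) (fi i s))) μ :=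
    fun i => aux_int hρ hρm hfm (hfim i) hf2 (hfi2 i)
  have hint_fif : ∀ i, Integrable (fun s => (ρ s : 𝕂) * (fi i s * (starRingEnd 𝕂) (f s))) μ :=
    fun i => aux_int hρ hρm (hfim i) hfm (hfi2 i) hf2
  have hint_fifi : ∀ i j, Integrable (fun s => (ρ s : 𝕂) * (fi i s * (starRingEnd 𝕂) (fi j s))) μ :=
    fun i j => aux_int hρ hρm (hfim i) (hfim j) (hfi2 i) (hfi2 j)
  have hval_ff : ∫ s, (ρ s : 𝕂) * (f s * (starRingEnd 𝕂) (f s)) ∂μ = (If : 𝕂) := by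
    rw [hIf, ← integral_ofReal]
    congr 1
    ext s
    rw [RCLike.mul_conj]
    push_cast
    ring
  have hval_fif : ∀ i, ∫ s, (ρ s : 𝕂) * (fi i s * (starRingEnd 𝕂) (f s)) ∂μ =
      (starRingEnd 𝕂) (c i) := by
    intro i
    rw [hc, ← integral_conj]
    congr 1
    ext s
    simp only [map_mul, RCLike.conj_ofReal, RCLike.conj_conj]
    ring
  -- pointwise expansion
  have hpt : ∀ (a b : I → 𝕂) (s : Ω), (ρ s : 𝕂) * ((f s - ∑ i ∈ F, a i * fi i s) *
          ((starRingEnd 𝕂) (f s) - ∑ j ∈ F, (starRingEnd 𝕂) (b j) * (starRingEnd 𝕂) (fi j s)))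
        = (ρ s : 𝕂) * (f s * (starRingEnd 𝕂) (f s))
          - ∑ j ∈ F, (starRingEnd 𝕂) (b j) * ((ρ s : 𝕂) * (f s * (starRingEnd 𝕂) (fi j s)))
          - ∑ i ∈ F, a i * ((ρ s : 𝕂) * (fi i s * (starRingEnd 𝕂) (f s)))
          + ∑ i ∈ F, ∑ j ∈ F, a i * (starRingEnd 𝕂) (b j) *
              ((ρ s : 𝕂) * (fi i s * (starRingEnd 𝕂) (fi j s))) := by
    intro a b s
    have h2 : (ρ s : 𝕂) * (f s * ∑ j ∈ F, (starRingEnd 𝕂) (b j) * (starRingEnd 𝕂) (fi j s))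
        = ∑ j ∈ F, (starRingEnd 𝕂) (b j) * ((ρ s : 𝕂) * (f s * (starRingEnd 𝕂) (fi j s))) := by
      rw [Finset.mul_sum, Finset.mul_sum]
      exact Finset.sum_congr rfl fun j _ => by ring
    have h3 : (ρ s : 𝕂) * ((∑ i ∈ F, a i * fi i s) * (starRingEnd 𝕂) (f s))
        = ∑ i ∈ F, a i * ((ρ s : 𝕂) * (fi i s * (starRingEnd 𝕂) (f s))) := by
      rw [Finset.sum_mul, Finset.mul_sum]
      exact Finset.sum_congr rfl fun i _ => by ring
    have h4 : (ρ s : 𝕂) * ((∑ i ∈ F, a i * fi i s) *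
          ∑ j ∈ F, (starRingEnd 𝕂) (b j) * (starRingEnd 𝕂) (fi j s))
        = ∑ i ∈ F, ∑ j ∈ F, a i * (starRingEnd 𝕂) (b j) *
            ((ρ s : 𝕂) * (fi i s * (starRingEnd 𝕂) (fi j s))) := by
      rw [Finset.sum_mul_sum]
      simp only [Finset.mul_sum]
      exact Finset.sum_congr rfl fun i _ => Finset.sum_congr rfl fun j _ => by ring
    rw [← h2, ← h3, ← h4]
    ring
  have hT2 : ∀ b : I → 𝕂, Integrable (fun s => ∑ j ∈ F, (starRingEnd 𝕂) (b j) *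
      ((ρ s : 𝕂) * (f s * (starRingEnd 𝕂) (fi j s)))) μ :=
    fun b => integrable_finset_sum _ fun j _ => (hint_ffi j).const_mul _
  have hT3 : ∀ a : I → 𝕂, Integrable (fun s => ∑ i ∈ F, a i *
      ((ρ s : 𝕂) * (fi i s * (starRingEnd 𝕂) (f s)))) μ :=
    fun a => integrable_finset_sum _ fun i _ => (hint_fif i).const_mul _
  have hT4 : ∀ a b : I → 𝕂, Integrable (fun s => ∑ i ∈ F, ∑ j ∈ F, a i * (starRingEnd 𝕂) (b j) *
      ((ρ s : 𝕂) * (fi i s * (starRingEnd 𝕂) (fi j s)))) μ :=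
    fun a b => integrable_finset_sum _ fun i _ =>
      integrable_finset_sum _ fun j _ => (hint_fifi i j).const_mul _
  have hintE : ∀ a b : I → 𝕂, Integrable (fun s => (ρ s : 𝕂) * ((f s - ∑ i ∈ F, a i * fi i s) *
      ((starRingEnd 𝕂) (f s) - ∑ j ∈ F, (starRingEnd 𝕂) (b j) * (starRingEnd 𝕂) (fi j s)))) μ :=
    fun a b => (((hint_ff.sub (hT2 b)).sub (hT3 a)).add (hT4 a b)).congr
      (Filter.Eventually.of_forall fun s => (hpt a b s).symm)
  -- the expansion lemma
  have expand : ∀ a b : I → 𝕂,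
      ∫ s, (ρ s : 𝕂) * ((f s - ∑ i ∈ F, a i * fi i s) *
          ((starRingEnd 𝕂) (f s) - ∑ j ∈ F, (starRingEnd 𝕂) (b j) * (starRingEnd 𝕂) (fi j s))) ∂μ
        = (If : 𝕂) - ∑ j ∈ F, (starRingEnd 𝕂) (b j) * c j
          - ∑ i ∈ F, a i * (starRingEnd 𝕂) (c i)
          + ∑ i ∈ F, a i * (starRingEnd 𝕂) (b i) := by
    intro a b
    have h12 : Integrable (fun s => (ρ s : 𝕂) * (f s * (starRingEnd 𝕂) (f s))
        - ∑ j ∈ F, (starRingEnd 𝕂) (b j) * ((ρ s : 𝕂) * (f s * (starRingEnd 𝕂) (fi j s)))) μ :=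
      hint_ff.sub (hT2 b)
    have h123 : Integrable (fun s => (ρ s : 𝕂) * (f s * (starRingEnd 𝕂) (f s))
        - ∑ j ∈ F, (starRingEnd 𝕂) (b j) * ((ρ s : 𝕂) * (f s * (starRingEnd 𝕂) (fi j s)))
        - ∑ i ∈ F, a i * ((ρ s : 𝕂) * (fi i s * (starRingEnd 𝕂) (f s)))) μ :=
      h12.sub (hT3 a)
    rw [integral_congr_ae (Filter.Eventually.of_forall (hpt a b)),
      integral_add h123 (hT4 a b),
      integral_sub h12 (hT3 a), integral_sub hint_ff (hT2 b),
      integral_finset_sum _ (fun j _ => (hint_ffi j).const_mul _),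
      integral_finset_sum _ (fun i _ => (hint_fif i).const_mul _),
      integral_finset_sum _ (fun i _ => integrable_finset_sum _
        fun j _ => (hint_fifi i j).const_mul _)]
    congr 1
    · congr 1
      · rw [hval_ff]
        congr 1
        refine Finset.sum_congr rfl fun j _ => ?_
        rw [integral_const_mul, hc]
      · refine Finset.sum_congr rfl fun i _ => ?_
        rw [integral_const_mul, hval_fif]
    · refine Finset.sum_congr rfl fun i hi => ?_
      rw [integral_finset_sum _ (fun j _ => (hint_fifi i j).const_mul _),
        Finset.sum_congr rfl (fun j (_ : j ∈ F) => integral_const_mul _ _)]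
      simp only [horth, mul_ite, mul_one, mul_zero]
      rw [Finset.sum_ite_eq F i (fun j => a i * (starRingEnd 𝕂) (b j))]
      simp [hi]
  -- Bessel's inequality
  have bessel : 0 ≤ If - ∑ i ∈ F, ‖c i‖ ^ 2 := by
    have h1 := expand c c
    have h2 : re (∫ s, (ρ s : 𝕂) * ((f s - ∑ i ∈ F, c i * fi i s) *
        ((starRingEnd 𝕂) (f s) - ∑ j ∈ F, (starRingEnd 𝕂) (c j) * (starRingEnd 𝕂) (fi j s))) ∂μ)
        = If - ∑ i ∈ F, ‖c i‖ ^ 2 := by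
      rw [h1]
      simp only [map_sub, map_add, map_sum]
      have : ∀ i ∈ F, re ((starRingEnd 𝕂) (c i) * c i) = ‖c i‖ ^ 2 := by
        intro i _
        rw [RCLike.conj_mul, ← RCLike.ofReal_pow, RCLike.ofReal_re]
      have hcc : ∀ i ∈ F, re (c i * (starRingEnd 𝕂) (c i)) = ‖c i‖ ^ 2 := by
        intro i _
        rw [RCLike.mul_conj, ← RCLike.ofReal_pow, RCLike.ofReal_re]
      rw [Finset.sum_congr rfl this, Finset.sum_congr rfl hcc, RCLike.ofReal_re]
      ring
    rw [← h2, ← integral_re (hintE c c)]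
    refine integral_nonneg fun s => ?_
    have : (ρ s : 𝕂) * ((f s - ∑ i ∈ F, c i * fi i s) *
        ((starRingEnd 𝕂) (f s) - ∑ j ∈ F, (starRingEnd 𝕂) (c j) * (starRingEnd 𝕂) (fi j s)))
        = (ρ s : 𝕂) * ((‖f s - ∑ i ∈ F, c i * fi i s‖ : 𝕂) ^ 2) := by
      rw [← RCLike.mul_conj]
      congr 2
      rw [map_sub, map_sum]
      congr 1
      refine Finset.sum_congr rfl fun i _ => ?_
      rw [map_mul]
    rw [this]
    have : re ((ρ s : 𝕂) * ((‖f s - ∑ i ∈ F, c i * fi i s‖ : 𝕂) ^ 2))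
        = ρ s * ‖f s - ∑ i ∈ F, c i * fi i s‖ ^ 2 := by
      rw [← RCLike.ofReal_pow, RCLike.re_ofReal_mul, RCLike.ofReal_re]
    rw [this]
    exact mul_nonneg (hρ s) (sq_nonneg _)
  -- the hypothesis rephrased
  have hxre : re ((If : 𝕂) - ∑ j ∈ F, (starRingEnd 𝕂) (φ j) * c j
      - ∑ i ∈ F, Φ i * (starRingEnd 𝕂) (c i)
      + ∑ i ∈ F, Φ i * (starRingEnd 𝕂) (φ i)) ≤ 0 := by
    rw [← expand Φ φ, ← integral_re (hintE Φ φ)]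
    have hpt : ∀ s, re ((ρ s : 𝕂) * ((f s - ∑ i ∈ F, Φ i * fi i s) *
        ((starRingEnd 𝕂) (f s) - ∑ j ∈ F, (starRingEnd 𝕂) (φ j) * (starRingEnd 𝕂) (fi j s))))
        = -(ρ s * re ((∑ i ∈ F, Φ i * fi i s - f s) *
        ((starRingEnd 𝕂) (f s) - ∑ i ∈ F, (starRingEnd 𝕂) (φ i) * (starRingEnd 𝕂) (fi i s)))) := by
      intro s
      rw [RCLike.re_ofReal_mul]
      have : (f s - ∑ i ∈ F, Φ i * fi i s) *
          ((starRingEnd 𝕂) (f s) - ∑ j ∈ F, (starRingEnd 𝕂) (φ j) * (starRingEnd 𝕂) (fi j s))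
          = -((∑ i ∈ F, Φ i * fi i s - f s) *
          ((starRingEnd 𝕂) (f s) - ∑ i ∈ F, (starRingEnd 𝕂) (φ i) * (starRingEnd 𝕂) (fi i s))) := by
        ring
      rw [this, map_neg]
      ring
    rw [integral_congr_ae (Filter.Eventually.of_forall hpt), integral_neg]
    linarith
  refine ⟨bessel, ?_, ?_⟩
  · -- middle inequality: reduce to hxre via per_i
    have key : ∀ i ∈ F, ‖(Φ i + φ i) / 2 - c i‖ ^ 2 - ‖c i‖ ^ 2 - (1 / 4) * ‖Φ i - φ i‖ ^ 2
        = re (Φ i * (starRingEnd 𝕂) (φ i)) - re ((starRingEnd 𝕂) (φ i) * c i)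
          - re (Φ i * (starRingEnd 𝕂) (c i)) := fun i _ => per_i _ _ _
    have hsum := Finset.sum_congr rfl key
    simp only [Finset.sum_sub_distrib, ← Finset.mul_sum] at hsum
    simp only [map_sub, map_add, map_sum, RCLike.ofReal_re] at hxre
    linarith
  · have : 0 ≤ ∑ i ∈ F, ‖(Φ i + φ i) / 2 - c i‖ ^ 2 :=
      Finset.sum_nonneg fun i _ => sq_nonneg _
    linarith
end

section
/- Let (Ω, Σ, μ) be a measure space, ρ ≥ 0 a μ-measurable weight, and (f_i)_{i∈I} an orthonormal family in L²_ρ(Ω, 𝕂). Let F be a finite subset of I, φ_i, Φ_i, γ_i, Γ_i ∈ 𝕂 for i ∈ F, and f, g ∈ L²_ρ(Ω, 𝕂) such that ∫_Ω ρ(s) Re[(Σ_{i∈F} Φ_i f_i(s) − f(s))(\overline{f(s)} − Σ_{i∈F} \overline{φ_i} \overline{f_i(s)})] dμ(s) ≥ 0 and ∫_Ω ρ(s) Re[(Σ_{i∈F} Γ_i f_i(s) − g(s))(\overline{g(s)} − Σ_{i∈F} \overline{γ_i} \overline{f_i(s)})] dμ(s) ≥ 0. Then |∫_Ω ρ f \overline{g}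 dμ − Σ_{i∈F} (∫_Ω ρ f \overline{f_i} dμ)(∫_Ω ρ f_i \overline{g} dμ)| ≤ (1/4)(Σ_{i∈F} |Φ_i − φ_i|²)^{1/2}(Σ_{i∈F} |Γ_i − γ_i|²)^{1/2} − Σ_{i∈F} |(Φ_i + φ_i)/2 − ∫_Ω ρ f \overline{f_i} dμ| · |(Γ_i + γ_i)/2 − ∫_Ω ρ g \overline{f_i} dμ| ≤ (1/4)(Σ_{i∈F} |Φ_i − φ_i|²)^{1/2}(Σ_{i∈F} |Γ_i − γ_i|²)^{1/2}. -/
/-!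
Realise `L²_ρ` as `Lp 𝕂 2 (weightedMeasure μ ρ)`: the integrals become inner products and `(f_i)` an
orthonormal family `e`. With `r x = x - ∑ i ∈ F, ⟪e i, x⟫ • e i`, the left-hand side is
`⟪r y, r x⟫`. By polarization the hypothesis on `x` says that `x` lies in the ball with centre
`∑ ((Φ i + φ i) / 2) • e i` and radius `‖∑ (Φ i - φ i) • e i‖ / 2`, which by Pythagoras reads
`‖r x‖² + ∑ |(Φ i + φ i) / 2 - ⟪e i, x⟫|² ≤ ¼ ∑ |Φ i - φ i|²`. Cauchy–Schwarz for `⟪r y, r x⟫`,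
for the sum over `F`, and in `ℝ²` combines the two bounds into the theorem.
-/

open RCLike Finset MeasureTheory
open scoped InnerProductSpace ComplexConjugate

theorem mul_add_mul_le_mul_of_sq_add_sq_le {p q b d a c : ℝ} (ha : 0 ≤ a) (hc : 0 ≤ c)
    (h₁ : p ^ 2 + b ^ 2 ≤ a ^ 2) (h₂ : q ^ 2 + d ^ 2 ≤ c ^ 2) : p * q + b * d ≤ a * c := by
  have lagrange : (p * q + b * d) ^ 2 ≤ (p ^ 2 + b ^ 2) * (q ^ 2 + d ^ 2) := by
    nlinarith [sq_nonneg (p * d - b * q)]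
  have : (p * q + b * d) ^ 2 ≤ (a * c) ^ 2 := by
    rw [mul_pow]
    exact lagrange.trans (mul_le_mul h₁ h₂ (by positivity) (by positivity))
  exact (le_abs_self _).trans (abs_le_of_sq_le_sq this (mul_nonneg ha hc))

section InnerProductSpace

variable {𝕂 E : Type*} [RCLike 𝕂] [NormedAddCommGroup E] [InnerProductSpace 𝕂 E]

theorem re_inner_sub_sub_eq (x u v : E) :
    re ⟪x - u, v - x⟫_𝕂 = ‖v - u‖ ^ 2 / 4 - ‖x - (2⁻¹ : 𝕂) • (u + v)‖ ^ 2 := by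
  have h2 : x - u - (v - x) = (2 : 𝕂) • (x - (2⁻¹ : 𝕂) • (u + v)) := by
    rw [smul_sub, smul_inv_smul₀ two_ne_zero, two_smul]; abel
  rw [re_inner_eq_norm_add_mul_self_sub_norm_sub_mul_self_div_four, h2, norm_smul,
    show x - u + (v - x) = v - u by abel, RCLike.norm_two]
  ring

variable {ι : Type*} {e : ι → E}

theorem Orthonormal.norm_sum_smul_sq (he : Orthonormal 𝕂 e) (s : Finset ι) (b : ι → 𝕂) :
    ‖∑ i ∈ s, b i • e i‖ ^ 2 = ∑ i ∈ s, ‖b i‖ ^ 2 := by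
  rw [@norm_sq_eq_re_inner 𝕂, he.inner_sum, map_sum]
  refine sum_congr rfl fun i _ => ?_
  rw [RCLike.conj_mul, ← ofReal_pow, ofReal_re]

theorem Orthonormal.inner_sub_sum_smul_eq_zero (he : Orthonormal 𝕂 e) (s : Finset ι) (x : E)
    (b : ι → 𝕂) :
    ⟪x - ∑ i ∈ s, ⟪e i, x⟫_𝕂 • e i, ∑ i ∈ s, b i • e i⟫_𝕂 = 0 := by
  rw [inner_sum]
  refine sum_eq_zero fun i hi => ?_
  rw [inner_smul_right, ← inner_conj_symm, inner_sub_right, he.inner_right_sum _ hi, sub_self,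
    map_zero, mul_zero]

theorem Orthonormal.norm_sub_sum_smul_sq (he : Orthonormal 𝕂 e) (s : Finset ι) (x : E)
    (c : ι → 𝕂) :
    ‖x - ∑ i ∈ s, c i • e i‖ ^ 2 =
      ‖x - ∑ i ∈ s, ⟪e i, x⟫_𝕂 • e i‖ ^ 2 + ∑ i ∈ s, ‖⟪e i, x⟫_𝕂 - c i‖ ^ 2 := by
  have hsplit : x - ∑ i ∈ s, c i • e i =
      (x - ∑ i ∈ s, ⟪e i, x⟫_𝕂 • e i) + ∑ i ∈ s, (⟪e i, x⟫_𝕂 - c i) • e i := by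
    simp only [sub_smul, sum_sub_distrib]; abel
  rw [hsplit, ← he.norm_sum_smul_sq s, sq, sq, sq,
    norm_add_sq_eq_norm_sq_add_norm_sq_of_inner_eq_zero _ _ (he.inner_sub_sum_smul_eq_zero s x _)]

theorem Orthonormal.inner_sub_sum_mul_inner_eq (he : Orthonormal 𝕂 e) (s : Finset ι) (x y : E) :
    ⟪y, x⟫_𝕂 - ∑ i ∈ s, ⟪e i, x⟫_𝕂 * ⟪y, e i⟫_𝕂 =
      ⟪y - ∑ i ∈ s, ⟪e i, y⟫_𝕂 • e i, x - ∑ i ∈ s, ⟪e i, x⟫_𝕂 • e i⟫_𝕂 := by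
  rw [inner_sub_right _ x, he.inner_sub_sum_smul_eq_zero, sub_zero, inner_sub_left, sum_inner]
  simp only [inner_smul_left, inner_conj_symm, mul_comm]

theorem Orthonormal.norm_sub_sum_sq_add_le (he : Orthonormal 𝕂 e) (s : Finset ι) {x : E}
    {φ Φ : ι → 𝕂}    (hx : 0 ≤ re ⟪x - ∑ i ∈ s, φ i • e i, ∑ i ∈ s, Φ i • e i - x⟫_𝕂) :
    ‖x - ∑ i ∈ s, ⟪e i, x⟫_𝕂 • e i‖ ^ 2 + ∑ i ∈ s, ‖(Φ i + φ i) / 2 - ⟪e i, x⟫_𝕂‖ ^ 2 ≤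
      (1 / 2 * √(∑ i ∈ s, ‖Φ i - φ i‖ ^ 2)) ^ 2 := by
  have hmid : (2⁻¹ : 𝕂) • (∑ i ∈ s, φ i • e i + ∑ i ∈ s, Φ i • e i) =
      ∑ i ∈ s, ((Φ i + φ i) / 2) • e i := by
    simp only [smul_sum, ← sum_add_distrib, smul_smul, ← add_smul, div_eq_inv_mul, mul_add,
      add_comm]
  have hdiff : ∑ i ∈ s, Φ i • e i - ∑ i ∈ s, φ i • e i = ∑ i ∈ s, (Φ i - φ i) • e i := by
    simp only [sub_smul, sum_sub_distrib]
  rw [re_inner_sub_sub_eq, hmid, hdiff, he.norm_sub_sum_smul_sq, he.norm_sum_smul_sq] at hx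
  simp only [norm_sub_rev (⟪e _, x⟫_𝕂)] at hx
  rw [mul_pow, Real.sq_sqrt (sum_nonneg fun i _ => by positivity)]
  linarith

theorem Orthonormal.norm_inner_sub_sum_mul_inner_le (he : Orthonormal 𝕂 e) (s : Finset ι)
    (x y : E) {φ Φ γ Γ : ι → 𝕂}    (hx : 0 ≤ re ⟪x - ∑ i ∈ s, φ i • e i, ∑ i ∈ s, Φ i • e i - x⟫_𝕂)
    (hy : 0 ≤ re ⟪y - ∑ i ∈ s, γ i • e i, ∑ i ∈ s, Γ i • e i - y⟫_𝕂) :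
    ‖⟪y, x⟫_𝕂 - ∑ i ∈ s, ⟪e i, x⟫_𝕂 * ⟪y, e i⟫_𝕂‖ ≤
      1 / 4 * √(∑ i ∈ s, ‖Φ i - φ i‖ ^ 2) * √(∑ i ∈ s, ‖Γ i - γ i‖ ^ 2) -
        ∑ i ∈ s, ‖(Φ i + φ i) / 2 - ⟪e i, x⟫_𝕂‖ * ‖(Γ i + γ i) / 2 - ⟪e i, y⟫_𝕂‖ := by
  set A := fun i => ‖(Φ i + φ i) / 2 - ⟪e i, x⟫_𝕂‖
  set B := fun i => ‖(Γ i + γ i) / 2 - ⟪e i, y⟫_𝕂‖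
  have hA := Real.sq_sqrt (sum_nonneg fun i (_ : i ∈ s) => sq_nonneg (A i))
  have hB := Real.sq_sqrt (sum_nonneg fun i (_ : i ∈ s) => sq_nonneg (B i))
  have key := mul_add_mul_le_mul_of_sq_add_sq_le (by positivity) (by positivity)
    (hA ▸ he.norm_sub_sum_sq_add_le s hx) (hB ▸ he.norm_sub_sum_sq_add_le s hy)
  have hcs := Real.sum_mul_le_sqrt_mul_sqrt s A B
  calc ‖⟪y, x⟫_𝕂 - ∑ i ∈ s, ⟪e i, x⟫_𝕂 * ⟪y, e i⟫_𝕂‖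
      ≤ ‖y - ∑ i ∈ s, ⟪e i, y⟫_𝕂 • e i‖ * ‖x - ∑ i ∈ s, ⟪e i, x⟫_𝕂 • e i‖ := by
        rw [he.inner_sub_sum_mul_inner_eq]; exact norm_inner_le_norm _ _
    _ ≤ _ := by linarith

end InnerProductSpace

section L2

variable {Ω 𝕂 : Type*} [MeasurableSpace Ω] [RCLike 𝕂] {ν : Measure Ω}

theorem MeasureTheory.L2.inner_eq_integral_of_ae_eq {A B : Lp 𝕂 2 ν} {a b : Ω → 𝕂}
    (ha : A =ᵐ[ν] a) (hb : B =ᵐ[ν] b) : ⟪A, B⟫_𝕂 = ∫ s, b s * conj (a s) ∂ν := by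
  rw [L2.inner_def]
  refine integral_congr_ae ?_
  filter_upwards [ha, hb] with s has hbs
  rw [has, hbs, RCLike.inner_apply]

theorem MeasureTheory.L2.integrable_conj_mul_of_ae_eq {A B : Lp 𝕂 2 ν} {a b : Ω → 𝕂}
    (ha : A =ᵐ[ν] a) (hb : B =ᵐ[ν] b) : Integrable (fun s => b s * conj (a s)) ν := by
  refine (L2.integrable_inner (𝕜 := 𝕂) A B).congr ?_
  filter_upwards [ha, hb] with s has hbs
  rw [has, hbs, RCLike.inner_apply]

theorem MeasureTheory.L2.re_inner_eq_integral_of_ae_eq {A B : Lp 𝕂 2 ν} {a b : Ω → 𝕂}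
    (ha : A =ᵐ[ν] a) (hb : B =ᵐ[ν] b) : re ⟪A, B⟫_𝕂 = ∫ s, re (b s * conj (a s)) ∂ν := by
  rw [L2.inner_eq_integral_of_ae_eq ha hb, integral_re (L2.integrable_conj_mul_of_ae_eq ha hb)]

theorem MeasureTheory.Lp.coeFn_sum_smul_of_ae_eq {ι : Type*} {p : ENNReal} (s : Finset ι)
    (c : ι → 𝕂) {e : ι → Lp 𝕂 p ν} {f : ι → Ω → 𝕂} (he : ∀ i, e i =ᵐ[ν] f i) :
    ⇑(∑ i ∈ s, c i • e i) =ᵐ[ν] fun x => ∑ i ∈ s, c i * f i x := by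
  have hsmul : ∀ᵐ x ∂ν, ∀ i ∈ s, (c i • e i) x = c i * f i x :=
    (Filter.eventually_all_finset s).2 fun i _ => by
      filter_upwards [Lp.coeFn_smul (c i) (e i), he i] with x hx hfx
      rw [hx, Pi.smul_apply, hfx, smul_eq_mul]
  filter_upwards [Lp.coeFn_fun_finsetSum s (fun i => c i • e i), hsmul] with x hx hsx
  rw [hx]
  exact sum_congr rfl hsx

end L2

section WeightedMeasure

variable {Ω 𝕂 : Type*} [MeasurableSpace Ω] [RCLike 𝕂] {μ : Measure Ω} {ρ : Ω → ℝ}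

noncomputable abbrev weightedMeasure (μ : Measure Ω) (ρ : Ω → ℝ) : Measure Ω :=
  μ.withDensity fun s => (ρ s).toNNReal

theorem integral_weightedMeasure {E : Type*} [NormedAddCommGroup E] [NormedSpace ℝ E]
    (hρ : ∀ s, 0 ≤ ρ s) (hρm : Measurable ρ) (h : Ω → E) :
    ∫ s, h s ∂weightedMeasure μ ρ = ∫ s, ρ s • h s ∂μ := by
  rw [integral_withDensity_eq_integral_smul hρm.real_toNNReal]
  simp only [NNReal.smul_def, Real.coe_toNNReal _ (hρ _)]

theorem memLp_two_weightedMeasure {h : Ω → 𝕂} (hρ : ∀ s, 0 ≤ ρ s) (hρm : Measurable ρ)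
    (hm : AEStronglyMeasurable h μ)
    (h2 : Integrable (fun s => ρ s * ‖h s‖ ^ 2) μ) :
    MemLp h 2 (weightedMeasure μ ρ) := by
  rw [memLp_two_iff_integrable_sq_norm (hm.mono_ac (withDensity_absolutelyContinuous μ _)),
    integrable_withDensity_iff_integrable_smul hρm.real_toNNReal]
  simpa only [NNReal.smul_def, Real.coe_toNNReal _ (hρ _), smul_eq_mul] using h2

theorem MeasureTheory.L2.inner_weightedMeasure_eq_integral (hρ : ∀ s, 0 ≤ ρ s)
    (hρm : Measurable ρ) {A B : Lp 𝕂 2 (weightedMeasure μ ρ)} {a b : Ω → 𝕂}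
    (ha : A =ᵐ[weightedMeasure μ ρ] a) (hb : B =ᵐ[weightedMeasure μ ρ] b) :
    ⟪A, B⟫_𝕂 = ∫ s, (ρ s : 𝕂) * (b s * conj (a s)) ∂μ := by
  simp only [L2.inner_eq_integral_of_ae_eq ha hb, integral_weightedMeasure hρ hρm,
    RCLike.real_smul_eq_coe_mul]

theorem MeasureTheory.L2.re_inner_weightedMeasure_eq_integral (hρ : ∀ s, 0 ≤ ρ s)
    (hρm : Measurable ρ) {A B : Lp 𝕂 2 (weightedMeasure μ ρ)} {a b : Ω → 𝕂}
    (ha : A =ᵐ[weightedMeasure μ ρ] a) (hb : B =ᵐ[weightedMeasure μ ρ] b) :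
    re ⟪A, B⟫_𝕂 = ∫ s, ρ s * re (b s * conj (a s)) ∂μ := by
  simp only [L2.re_inner_eq_integral_of_ae_eq ha hb, integral_weightedMeasure hρ hρm,
    smul_eq_mul]

theorem MeasureTheory.L2.re_inner_sub_sum_smul_weightedMeasure (hρ : ∀ s, 0 ≤ ρ s)
    (hρm : Measurable ρ) {ι : Type*} {e : ι → Lp 𝕂 2 (weightedMeasure μ ρ)}
    {fi : ι → Ω → 𝕂} (he : ∀ i, e i =ᵐ[weightedMeasure μ ρ] fi i)
    {x : Lp 𝕂 2 (weightedMeasure μ ρ)} {u : Ω → 𝕂} (hx : x =ᵐ[weightedMeasure μ ρ] u)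
    (s : Finset ι) (c C : ι → 𝕂) :
    re ⟪x - ∑ i ∈ s, c i • e i, ∑ i ∈ s, C i • e i - x⟫_𝕂 =
      ∫ t, ρ t * re ((∑ i ∈ s, C i * fi i t - u t) *
        (conj (u t) - ∑ i ∈ s, conj (c i) * conj (fi i t))) ∂μ := by
  rw [L2.re_inner_weightedMeasure_eq_integral hρ hρm
    ((Lp.coeFn_sub _ _).trans (hx.sub (Lp.coeFn_sum_smul_of_ae_eq s c he)))
    ((Lp.coeFn_sub _ _).trans ((Lp.coeFn_sum_smul_of_ae_eq s C he).sub hx))]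
  simp only [Pi.sub_apply, map_sub, map_sum, map_mul]

end WeightedMeasure

variable {𝕂 Ω I : Type*} [RCLike 𝕂] [MeasurableSpace Ω] [DecidableEq I]

theorem stmt16 (μ : Measure Ω) (ρ : Ω → ℝ) (hρ : ∀ s, 0 ≤ ρ s) (hρm : Measurable ρ)
    (fi : I → Ω → 𝕂) (hfim : ∀ i, AEStronglyMeasurable (fi i) μ)
    (hfi2 : ∀ i, Integrable (fun s => ρ s * ‖fi i s‖ ^ 2) μ)
    (horth : ∀ i j, ∫ s, (ρ s : 𝕂) * (fi i s * (starRingEnd 𝕂) (fi j s)) ∂μ =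
      if i = j then 1 else 0)
    (F : Finset I) (φ Φ γ Γ : I → 𝕂)
    (f g : Ω → 𝕂) (hfm : AEStronglyMeasurable f μ) (hgm : AEStronglyMeasurable g μ)
    (hf2 : Integrable (fun s => ρ s * ‖f s‖ ^ 2) μ)
    (hg2 : Integrable (fun s => ρ s * ‖g s‖ ^ 2) μ)
    (hx : 0 ≤ ∫ s, ρ s * re ((∑ i ∈ F, Φ i * fi i s - f s) *
        ((starRingEnd 𝕂) (f s) - ∑ i ∈ F, (starRingEnd 𝕂) (φ i) * (starRingEnd 𝕂) (fi i s))) ∂μ)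
    (hy : 0 ≤ ∫ s, ρ s * re ((∑ i ∈ F, Γ i * fi i s - g s) *
        ((starRingEnd 𝕂) (g s) - ∑ i ∈ F, (starRingEnd 𝕂) (γ i) * (starRingEnd 𝕂) (fi i s))) ∂μ) :
    ‖(∫ s, (ρ s : 𝕂) * (f s * (starRingEnd 𝕂) (g s)) ∂μ) -
        ∑ i ∈ F, (∫ s, (ρ s : 𝕂) * (f s * (starRingEnd 𝕂) (fi i s)) ∂μ) *
          (∫ s, (ρ s : 𝕂) * (fi i s * (starRingEnd 𝕂) (g s)) ∂μ)‖ ≤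
      (1 / 4) * Real.sqrt (∑ i ∈ F, ‖Φ i - φ i‖ ^ 2) *
          Real.sqrt (∑ i ∈ F, ‖Γ i - γ i‖ ^ 2) -
        ∑ i ∈ F, ‖(Φ i + φ i) / 2 - ∫ s, (ρ s : 𝕂) * (f s * (starRingEnd 𝕂) (fi i s)) ∂μ‖ *
          ‖(Γ i + γ i) / 2 - ∫ s, (ρ s : 𝕂) * (g s * (starRingEnd 𝕂) (fi i s)) ∂μ‖ ∧
    (1 / 4) * Real.sqrt (∑ i ∈ F, ‖Φ i - φ i‖ ^ 2) *
          Real.sqrt (∑ i ∈ F, ‖Γ i - γ i‖ ^ 2) -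
        ∑ i ∈ F, ‖(Φ i + φ i) / 2 - ∫ s, (ρ s : 𝕂) * (f s * (starRingEnd 𝕂) (fi i s)) ∂μ‖ *
          ‖(Γ i + γ i) / 2 - ∫ s, (ρ s : 𝕂) * (g s * (starRingEnd 𝕂) (fi i s)) ∂μ‖ ≤
      (1 / 4) * Real.sqrt (∑ i ∈ F, ‖Φ i - φ i‖ ^ 2) *
          Real.sqrt (∑ i ∈ F, ‖Γ i - γ i‖ ^ 2) := by
  have hmem {h : Ω → 𝕂} := memLp_two_weightedMeasure (μ := μ) (h := h) hρ hρm
  let X := (hmem hfm hf2).toLp f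
  let Y := (hmem hgm hg2).toLp g
  let e i := (hmem (hfim i) (hfi2 i)).toLp (fi i)
  have hX : X =ᵐ[_] f := MemLp.coeFn_toLp _
  have hY : Y =ᵐ[_] g := MemLp.coeFn_toLp _
  have hE i : e i =ᵐ[_] fi i := MemLp.coeFn_toLp _
  have horth' : Orthonormal 𝕂 e := orthonormal_iff_ite.2 fun i j => by
    rw [L2.inner_weightedMeasure_eq_integral hρ hρm (hE i) (hE j), horth j i]
    exact if_congr eq_comm rfl rfl
  have gruss := horth'.norm_inner_sub_sum_mul_inner_le F X Y
    ((L2.re_inner_sub_sum_smul_weightedMeasure hρ hρm hE hX F φ Φ).symm ▸ hx)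
    ((L2.re_inner_sub_sum_smul_weightedMeasure hρ hρm hE hY F γ Γ).symm ▸ hy)
  have hinner := @L2.inner_weightedMeasure_eq_integral _ 𝕂 _ _ μ ρ hρ hρm
  simp only [hinner hY hX, hinner (hE _) hX, hinner hY (hE _), hinner (hE _) hY] at gruss
  exact ⟨gruss, sub_le_self _ (sum_nonneg fun i _ => by positivity)⟩
end

section
/- Let (Ω, Σ, μ) be a measure space, ρ ≥ 0 a μ-measurable weight, and (f_i)_{i∈I} an orthonormal family in the real Hilbert space L²_ρ(Ω). Let F be a finite subset of I, m_i, M_i ∈ ℝ for i ∈ F, and f ∈ L²_ρ(Ω) such that Σ_{i∈F} m_i f_i(s) ≤ f(s) ≤ Σ_{i∈F} M_i f_i(s) for μ-almost every s ∈ Ω. Then 0 ≤ ∫_Ω ρ f² dμ − Σ_{i∈F} (∫_Ω ρ f f_i dμ)² ≤ (1/4) Σ_{i∈F} (M_i − m_i)² − Σ_{i∈F} ((M_i + m_i)/2 − ∫_Ω ρ f f_i dμ)² ≤ (1/4) Σ_{i∈F} (M_i − m_i)². -/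
open Finset MeasureTheory

variable {Ω I : Type*} [MeasurableSpace Ω] [DecidableEq I]

lemma aux_int_prod (μ : Measure Ω) (ρ : Ω → ℝ) (hρ : ∀ s, 0 ≤ ρ s) (hρm : Measurable ρ)
    (g h : Ω → ℝ) (hg : AEStronglyMeasurable g μ) (hh : AEStronglyMeasurable h μ)
    (hg2 : Integrable (fun s => ρ s * g s ^ 2) μ)
    (hh2 : Integrable (fun s => ρ s * h s ^ 2) μ) :
    Integrable (fun s => ρ s * (g s * h s)) μ := by
  refine Integrable.mono ((hg2.add hh2).const_mul (1/2)) (hρm.aestronglyMeasurable.mul (hg.mul hh)) ?_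
  filter_upwards with s
  simp only [Real.norm_eq_abs]
  have h0 := hρ s
  have h1 : |ρ s * (g s * h s)| = ρ s * |g s * h s| := by
    rw [abs_mul, abs_of_nonneg h0]
  have h2 : |g s * h s| ≤ (g s ^ 2 + h s ^ 2) / 2 := by
    rw [abs_mul]
    nlinarith [sq_nonneg (|g s| - |h s|), sq_abs (g s), sq_abs (h s)]
  have h3 : (0:ℝ) ≤ 1/2 * (ρ s * g s ^ 2 + ρ s * h s ^ 2) := by positivity
  simp only [Pi.add_apply]
  rw [h1, abs_of_nonneg h3]
  nlinarith

theorem stmt17 (μ : Measure Ω) (ρ : Ω → ℝ) (hρ : ∀ s, 0 ≤ ρ s) (hρm : Measurable ρ)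
    (fi : I → Ω → ℝ) (hfim : ∀ i, AEStronglyMeasurable (fi i) μ)
    (hfi2 : ∀ i, Integrable (fun s => ρ s * fi i s ^ 2) μ)
    (horth : ∀ i j, ∫ s, ρ s * (fi i s * fi j s) ∂μ = if i = j then 1 else 0)
    (F : Finset I) (m M : I → ℝ)
    (f : Ω → ℝ) (hfm : AEStronglyMeasurable f μ)
    (hf2 : Integrable (fun s => ρ s * f s ^ 2) μ)
    (hbound : ∀ᵐ s ∂μ, (∑ i ∈ F, m i * fi i s) ≤ f s ∧ f s ≤ ∑ i ∈ F, M i * fi i s) :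
    0 ≤ (∫ s, ρ s * f s ^ 2 ∂μ) - ∑ i ∈ F, (∫ s, ρ s * (f s * fi i s) ∂μ) ^ 2 ∧
    (∫ s, ρ s * f s ^ 2 ∂μ) - ∑ i ∈ F, (∫ s, ρ s * (f s * fi i s) ∂μ) ^ 2 ≤
      (1 / 4) * ∑ i ∈ F, (M i - m i) ^ 2 -
        ∑ i ∈ F, ((M i + m i) / 2 - ∫ s, ρ s * (f s * fi i s) ∂μ) ^ 2 ∧
    (1 / 4) * ∑ i ∈ F, (M i - m i) ^ 2 -
        ∑ i ∈ F, ((M i + m i) / 2 - ∫ s, ρ s * (f s * fi i s) ∂μ) ^ 2 ≤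
      (1 / 4) * ∑ i ∈ F, (M i - m i) ^ 2 := by
  set c : I → ℝ := fun i => ∫ s, ρ s * (f s * fi i s) ∂μ with hcdef
  -- integrability of products
  have hffi : ∀ i, Integrable (fun s => ρ s * (f s * fi i s)) μ := fun i =>
    aux_int_prod μ ρ hρ hρm f (fi i) hfm (hfim i) hf2 (hfi2 i)
  have hfifj : ∀ i j, Integrable (fun s => ρ s * (fi i s * fi j s)) μ := fun i j =>
    aux_int_prod μ ρ hρ hρm (fi i) (fi j) (hfim i) (hfim j) (hfi2 i) (hfi2 j)
  -- key expansion
  have key : ∀ a b : I → ℝ,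
      ∫ s, ρ s * ((f s - ∑ i ∈ F, a i * fi i s) * (f s - ∑ i ∈ F, b i * fi i s)) ∂μ =
        (∫ s, ρ s * f s ^ 2 ∂μ) - ∑ i ∈ F, (a i + b i) * c i + ∑ i ∈ F, a i * b i := by
    intro a b
    have expand : ∀ s, ρ s * ((f s - ∑ i ∈ F, a i * fi i s) * (f s - ∑ i ∈ F, b i * fi i s)) =
        ρ s * f s ^ 2 - (∑ i ∈ F, (a i + b i) * (ρ s * (f s * fi i s)))
          + ∑ i ∈ F, ∑ j ∈ F, a i * b j * (ρ s * (fi i s * fi j s)) := by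
      intro s
      have e1 : ∑ i ∈ F, (a i + b i) * (ρ s * (f s * fi i s)) =
          ρ s * (f s * ((∑ i ∈ F, a i * fi i s) + ∑ i ∈ F, b i * fi i s)) := by
        rw [← Finset.sum_add_distrib, Finset.mul_sum, Finset.mul_sum]
        exact Finset.sum_congr rfl fun i _ => by ring
      have e2 : ∑ i ∈ F, ∑ j ∈ F, a i * b j * (ρ s * (fi i s * fi j s)) =
          ρ s * ((∑ i ∈ F, a i * fi i s) * (∑ i ∈ F, b i * fi i s)) := by
        rw [Finset.sum_mul_sum, Finset.mul_sum]
        refine Finset.sum_congr rfl fun i _ => ?_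
        rw [Finset.mul_sum]
        exact Finset.sum_congr rfl fun j _ => by ring
      rw [e1, e2]; ring
    have hI1 : Integrable (fun s => ∑ i ∈ F, (a i + b i) * (ρ s * (f s * fi i s))) μ :=
      integrable_finset_sum _ fun i _ => (hffi i).const_mul _
    have hI2 : Integrable
        (fun s => ∑ i ∈ F, ∑ j ∈ F, a i * b j * (ρ s * (fi i s * fi j s))) μ :=
      integrable_finset_sum _ fun i _ => integrable_finset_sum _ fun j _ =>
        (hfifj i j).const_mul _
    calc ∫ s, ρ s * ((f s - ∑ i ∈ F, a i * fi i s) * (f s - ∑ i ∈ F, b i * fi i s)) ∂μ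
        = ∫ s, (ρ s * f s ^ 2 - (∑ i ∈ F, (a i + b i) * (ρ s * (f s * fi i s)))
            + ∑ i ∈ F, ∑ j ∈ F, a i * b j * (ρ s * (fi i s * fi j s))) ∂μ := by
          exact integral_congr_ae (Filter.Eventually.of_forall expand)
      _ = (∫ s, ρ s * f s ^ 2 ∂μ) - ∑ i ∈ F, (a i + b i) * c i + ∑ i ∈ F, a i * b i := by
          have hI0 : Integrable (fun s => ρ s * f s ^ 2
              - ∑ i ∈ F, (a i + b i) * (ρ s * (f s * fi i s))) μ := hf2.sub hI1
          rw [integral_add hI0 hI2, integral_sub hf2 hI1,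
            integral_finset_sum _ (fun i _ => (hffi i).const_mul _),
            integral_finset_sum _ (fun i _ => integrable_finset_sum _ fun j _ =>
              (hfifj i j).const_mul _)]
          congr 1
          · congr 1
            exact Finset.sum_congr rfl fun i _ => integral_const_mul _ _
          · refine Finset.sum_congr rfl fun i hi => ?_
            rw [integral_finset_sum _ (fun j _ => (hfifj i j).const_mul _)]
            rw [show (∑ j ∈ F, ∫ s, a i * b j * (ρ s * (fi i s * fi j s)) ∂μ)
                = ∑ j ∈ F, a i * b j * (if i = j then 1 else 0) from
              Finset.sum_congr rfl fun j _ => by rw [integral_const_mul, horth i j]]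
            simp [Finset.sum_ite_eq, hi]
  -- Bessel
  have hBessel : 0 ≤ (∫ s, ρ s * f s ^ 2 ∂μ) - ∑ i ∈ F, c i ^ 2 := by
    have h0 : 0 ≤ ∫ s, ρ s * ((f s - ∑ i ∈ F, c i * fi i s) * (f s - ∑ i ∈ F, c i * fi i s)) ∂μ :=
      integral_nonneg fun s => mul_nonneg (hρ s) (mul_self_nonneg _)
    rw [key c c] at h0
    have e3 : ∑ i ∈ F, (c i + c i) * c i = 2 * ∑ i ∈ F, c i ^ 2 := by
      rw [Finset.mul_sum]; exact Finset.sum_congr rfl fun i _ => by ring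
    have e4 : ∑ i ∈ F, c i * c i = ∑ i ∈ F, c i ^ 2 :=
      Finset.sum_congr rfl fun i _ => (sq (c i)).symm
    rw [e3, e4] at h0
    linarith
  -- Grüss
  have hG : (∫ s, ρ s * f s ^ 2 ∂μ) - ∑ i ∈ F, (M i + m i) * c i + ∑ i ∈ F, M i * m i ≤ 0 := by
    rw [← key M m]
    apply integral_nonpos_of_ae
    filter_upwards [hbound] with s hs
    obtain ⟨h1, h2⟩ := hs
    have hprod : (f s - ∑ i ∈ F, M i * fi i s) * (f s - ∑ i ∈ F, m i * fi i s) ≤ 0 :=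
      mul_nonpos_of_nonpos_of_nonneg (by linarith) (by linarith)
    exact mul_nonpos_of_nonneg_of_nonpos (hρ s) hprod
  have ealg : (1 / 4) * (∑ i ∈ F, (M i - m i) ^ 2) - ∑ i ∈ F, ((M i + m i) / 2 - c i) ^ 2 =
      ∑ i ∈ F, (M i + m i) * c i - ∑ i ∈ F, M i * m i - ∑ i ∈ F, c i ^ 2 := by
    rw [Finset.mul_sum, ← Finset.sum_sub_distrib, ← Finset.sum_sub_distrib,
      ← Finset.sum_sub_distrib]
    exact Finset.sum_congr rfl fun i _ => by ring
  have hsq : 0 ≤ ∑ i ∈ F, ((M i + m i) / 2 - c i) ^ 2 :=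
    Finset.sum_nonneg fun i _ => sq_nonneg _
  refine ⟨hBessel, by rw [ealg]; linarith, by linarith⟩
end
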